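/- arXiv:2004.07722 — 8 statements merged into one kernel-verified Lean document; each statement's English description precedes it below -/
import Mathlib

section
/- Let P, Q ⊆ ℤ^r be finite sets such that there is an invertible affine-linear transformation φ : ℚ^r → ℚ^r (i.e., φ(v) = Mv + b with M an invertible r×r rational matrix and b ∈ ℚ^r) satisfying φ(P) = Q, where P and Q are viewed inside ℚ^r. Then there is a constant c = c_{P,Q} ∈ (0,1) such that pdd_Q(c·α) ≤ pdd_P(α) for all α ∈ (0,1). -/
/-!
Clearing denominators turns `φ` into `p ↦ (T p + w) / L` with `T` an injective integer matrix.
Given `A ⊆ [N]^r` of density `α`, keep its most popular residue class modulo `g` (losing a factor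
`g^r`), where `g` is the absolute value of a nonzero coordinate difference of `P`, and push it
into the box `[CN]^r` by `a ↦ T a + s`. A copy `y + d • Q` inside the image pulls back to a copy of
`P` dilated by `d / L`, and the residue condition forces `d / L` to be an integer `θ`. Distinct `y`
give distinct pulled-back copies, so `Q`-copies in the image are at most as many as the
`P`-copies in `A` with difference `θ`, and the image has density at least `α / (g C)^r`.
-/

noncomputable def pdd (r : ℕ) (P : Finset (Fin r → ℤ)) (α : ℝ) : ℝ :=
  sSup ({0} ∪ {β : ℝ | ∀ ε : ℝ, 0 < ε → ∃ N0 : ℕ, ∀ N : ℕ, N0 ≤ N →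
    ∀ A : Finset (Fin r → ℤ),
      (∀ a ∈ A, ∀ i, 1 ≤ a i ∧ a i ≤ (N : ℤ)) →
      α * (N : ℝ) ^ r ≤ A.card →
    ∃ d : ℤ, d ≠ 0 ∧
      (β - ε) * (N : ℝ) ^ r ≤
        (({x : Fin r → ℤ | ∀ p ∈ P, x + d • p ∈ A}).ncard : ℝ)})

open Finset Matrix

namespace PopularDifference

variable {r : ℕ}

def copies (P A : Finset (Fin r → ℤ)) (d : ℤ) : Set (Fin r → ℤ) :=
  {x | ∀ p ∈ P, x + d • p ∈ A}

noncomputable def box (r N : ℕ) : Finset (Fin r → ℤ) :=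
  Fintype.piFinset fun _ => Icc 1 (N : ℤ)

def pddSet (r : ℕ) (P : Finset (Fin r → ℤ)) (α : ℝ) : Set ℝ :=
  {β | ∀ ε : ℝ, 0 < ε → ∃ N0 : ℕ, ∀ N : ℕ, N0 ≤ N →
    ∀ A : Finset (Fin r → ℤ), (∀ a ∈ A, ∀ i, 1 ≤ a i ∧ a i ≤ (N : ℤ)) →
      α * (N : ℝ) ^ r ≤ A.card →
      ∃ d : ℤ, d ≠ 0 ∧ (β - ε) * (N : ℝ) ^ r ≤ ((copies P A d).ncard : ℝ)}

theorem pdd_eq_sSup (P : Finset (Fin r → ℤ)) (α : ℝ) :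
    pdd r P α = sSup ({0} ∪ pddSet r P α) := rfl

theorem mem_box {N : ℕ} {a : Fin r → ℤ} : a ∈ box r N ↔ ∀ i, 1 ≤ a i ∧ a i ≤ (N : ℤ) := by
  simp [box]

theorem card_box (r N : ℕ) : #(box r N) = N ^ r := by
  simp [box]

theorem copies_empty (A : Finset (Fin r → ℤ)) (d : ℤ) : copies ∅ A d = Set.univ := by
  simp [copies]

theorem copies_mono {P A A' : Finset (Fin r → ℤ)} (h : A' ⊆ A) (d : ℤ) :
    copies P A' d ⊆ copies P A d :=
  fun _ hx p hp => h (hx p hp)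

variable {P : Finset (Fin r → ℤ)} {p₀ : Fin r → ℤ}

theorem copies_subset_preimage (A : Finset (Fin r → ℤ)) (d : ℤ) (hp₀ : p₀ ∈ P) :
    copies P A d ⊆ (· + d • p₀) ⁻¹' (A : Set (Fin r → ℤ)) :=
  fun _ hx => hx p₀ hp₀

theorem finite_copies (A : Finset (Fin r → ℤ)) (d : ℤ) (hp₀ : p₀ ∈ P) :
    (copies P A d).Finite :=
  (A.finite_toSet.preimage (add_left_injective _).injOn).subset
    (copies_subset_preimage A d hp₀)

theorem ncard_copies_le_card (A : Finset (Fin r → ℤ)) (d : ℤ) (hp₀ : p₀ ∈ P) :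
    (copies P A d).ncard ≤ #A := by
  simpa using Set.ncard_le_ncard_of_injOn (t := (A : Set (Fin r → ℤ))) (· + d • p₀)
    (copies_subset_preimage A d hp₀) (add_left_injective _).injOn A.finite_toSet

theorem ncard_copies_le_pow {N : ℕ} {A : Finset (Fin r → ℤ)} (hA : A ⊆ box r N) (d : ℤ) :
    (copies P A d).ncard ≤ N ^ r := by
  rcases P.eq_empty_or_nonempty with rfl | ⟨p₀, hp₀⟩
  -- every `x` is a copy of `∅`, and `ncard` of the infinite set `ℤ^r` is `0` unless `r = 0`
  · rw [copies_empty, Set.ncard_univ, Nat.card_fun, Nat.card_eq_zero_of_infinite, Nat.card_fin]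
    exact Nat.pow_le_pow_left (Nat.zero_le N) r
  · exact (ncard_copies_le_card A d hp₀).trans (card_box r N ▸ card_le_card hA)

theorem le_one_of_mem_pddSet {α β : ℝ} (hα : α ≤ 1) (hβ : β ∈ pddSet r P α) :
    β ≤ 1 := by
  refine le_of_forall_pos_le_add fun ε hε => ?_
  obtain ⟨N₀, hN₀⟩ := hβ ε hε
  set N := max N₀ 1
  have hN : (0 : ℝ) < (N : ℝ) ^ r := by positivity
  obtain ⟨d, -, hd⟩ := hN₀ N (le_max_left _ _) (box r N) (fun a ha => mem_box.1 ha)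
    (by rw [card_box]; push_cast; nlinarith)
  have hle : ((copies P (box r N) d).ncard : ℝ) ≤ (N : ℝ) ^ r := by
    exact_mod_cast ncard_copies_le_pow subset_rfl d
  nlinarith

theorem pddSet_mono {α α' : ℝ} (h : α ≤ α') : pddSet r P α ⊆ pddSet r P α' := by
  intro β hβ ε hε
  obtain ⟨N₀, hN₀⟩ := hβ ε hε
  exact ⟨N₀, fun N hN A hA hcard =>
    hN₀ N hN A hA ((mul_le_mul_of_nonneg_right h (by positivity)).trans hcard)⟩

theorem pdd_le_pdd {Q : Finset (Fin r → ℤ)} {α α' : ℝ} (hα : α ≤ 1)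
    (h : pddSet r Q α' ⊆ pddSet r P α) : pdd r Q α' ≤ pdd r P α := by
  rw [pdd_eq_sSup, pdd_eq_sSup]
  exact csSup_le_csSup (bddAbove_singleton.union ⟨1, fun _ hβ => le_one_of_mem_pddSet hα hβ⟩)
    ⟨0, Or.inl rfl⟩ (Set.union_subset_union_right _ h)

def IsCopyTransfer (P Q : Finset (Fin r → ℤ)) (C K : ℕ) : Prop :=
  ∀ (N : ℕ) (A : Finset (Fin r → ℤ)), A ⊆ box r N →
    ∃ B ⊆ box r (C * N), #A ≤ K * #B ∧
      ∀ d ≠ 0, ∃ θ ≠ 0, (copies Q B d).ncard ≤ (copies P A θ).ncard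

theorem pddSet_subset_of_isCopyTransfer {Q : Finset (Fin r → ℤ)} {C K : ℕ}
    (h : IsCopyTransfer P Q C K) (hC : 0 < C) {c : ℝ} (hc₀ : 0 ≤ c) (hc : c * (K * C ^ r) ≤ 1)
    (α : ℝ) : pddSet r Q (c * α) ⊆ pddSet r P α := by
  intro β hβ ε hε
  obtain ⟨N₀, hN₀⟩ := hβ ε hε
  refine ⟨N₀, fun N hN A hA hAcard => ?_⟩
  obtain ⟨B, hB, hAB, hcopies⟩ := h N A fun a ha => mem_box.2 (hA a ha)
  have hBcard : c * α * ((C * N : ℕ) : ℝ) ^ r ≤ #B := by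
    have hcC : 0 ≤ c * C ^ r := by positivity
    calc c * α * ((C * N : ℕ) : ℝ) ^ r = c * C ^ r * (α * N ^ r) := by push_cast; ring
      _ ≤ c * C ^ r * (K * #B) :=
        mul_le_mul_of_nonneg_left (hAcard.trans (by exact_mod_cast hAB)) hcC
      _ = c * (K * C ^ r) * #B := by ring
      _ ≤ #B := mul_le_of_le_one_left (Nat.cast_nonneg _) hc
  have hNC : N ≤ C * N := Nat.le_mul_of_pos_left N hC
  obtain ⟨d, hd, hdB⟩ := hN₀ (C * N) (hN.trans hNC) B
    (fun b hb => mem_box.1 (hB hb)) hBcard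
  obtain ⟨θ, hθ, hle⟩ := hcopies d hd
  refine ⟨θ, hθ, ?_⟩
  rcases le_or_gt (β - ε) 0 with hneg | hpos
  · exact (mul_nonpos_of_nonpos_of_nonneg hneg (by positivity)).trans (Nat.cast_nonneg _)
  · calc (β - ε) * (N : ℝ) ^ r ≤ (β - ε) * ((C * N : ℕ) : ℝ) ^ r := by gcongr
      _ ≤ (copies Q B d).ncard := hdB
      _ ≤ (copies P A θ).ncard := by exact_mod_cast hle

def IsDilationModulus (P : Finset (Fin r → ℤ)) (p₀ : Fin r → ℤ) (g : ℕ) : Prop :=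
  ∀ L d : ℤ, L ≠ 0 → d ≠ 0 → (∀ p ∈ P, ∀ i, L * g ∣ d * (p i - p₀ i)) →
    ∃ θ ≠ 0, ∀ p ∈ P, d • (p - p₀) = (L * θ) • (p - p₀)

theorem exists_isDilationModulus (P : Finset (Fin r → ℤ)) (p₀ : Fin r → ℤ) :
    ∃ g, 0 < g ∧ IsDilationModulus P p₀ g := by
  by_cases h : ∃ p ∈ P, ∃ i, p i ≠ p₀ i
  · obtain ⟨p₁, hp₁, i, hi⟩ := h
    have hδ : p₁ i - p₀ i ≠ 0 := sub_ne_zero.2 hi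
    refine ⟨(p₁ i - p₀ i).natAbs, Int.natAbs_pos.2 hδ, fun L d _ hd hdvd => ?_⟩
    have hLd : L ∣ d := by
      have h₁ := hdvd p₁ hp₁ i
      rw [Int.natCast_natAbs] at h₁
      exact (mul_dvd_mul_iff_right hδ).1 ((mul_dvd_mul_left L (self_dvd_abs _)).trans h₁)
    obtain ⟨θ, rfl⟩ := hLd
    exact ⟨θ, right_ne_zero_of_mul hd, fun _ _ => rfl⟩
  · push Not at h
    refine ⟨1, one_pos, fun L d _ _ _ => ⟨1, one_ne_zero, fun p hp => ?_⟩⟩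
    rw [show p - p₀ = 0 from funext fun i => sub_eq_zero.2 (h p hp i)]
    simp

theorem exists_subset_card_le_forall_dvd_sub (A : Finset (Fin r → ℤ)) {g : ℕ} (hg : 0 < g) :
    ∃ A' ⊆ A, #A ≤ g ^ r * #A' ∧ ∀ a ∈ A', ∀ a' ∈ A', ∀ i, (g : ℤ) ∣ a i - a' i := by
  have : NeZero g := ⟨hg.ne'⟩
  have hcard : #(univ : Finset (Fin r → ZMod g)) = g ^ r := by simp
  obtain ⟨ρ, -, hρ⟩ := exists_le_card_fiber_of_nsmul_le_card_of_maps_to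
    (f := fun (a : Fin r → ℤ) i => (a i : ZMod g)) (fun _ _ => mem_univ _) univ_nonempty
    (b := (#A : ℝ) / g ^ r)
    (by rw [hcard, nsmul_eq_mul, Nat.cast_pow, mul_div_cancel₀ _ (by positivity)])
  refine ⟨{a ∈ A | (fun i => (a i : ZMod g)) = ρ}, filter_subset _ _, ?_, ?_⟩
  · rw [div_le_iff₀ (by positivity)] at hρ
    exact_mod_cast hρ.trans_eq (mul_comm _ _)
  · intro a ha a' ha' i
    rw [mem_filter] at ha ha'
    exact (ZMod.intCast_eq_intCast_iff_dvd_sub _ _ _).1 (congrFun (ha'.2.trans ha.2.symm) i)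

theorem abs_mulVec_apply_le (T : Matrix (Fin r) (Fin r) ℤ) {N : ℕ} {a : Fin r → ℤ}
    (ha : a ∈ box r N) (i : Fin r) : |(T *ᵥ a) i| ≤ (∑ k, ∑ j, |T k j|) * N := by
  have hrow : ∑ j, |T i j| ≤ ∑ k, ∑ j, |T k j| :=
    single_le_sum (f := fun k => ∑ j, |T k j|) (fun _ _ => sum_nonneg fun _ _ => abs_nonneg _)
      (mem_univ i)
  calc |(T *ᵥ a) i| = |∑ j, T i j * a j| := rfl
    _ ≤ ∑ j, |T i j * a j| := abs_sum_le_sum_abs _ _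
    _ ≤ ∑ j, |T i j| * N := by
        refine sum_le_sum fun j _ => ?_
        obtain ⟨h₁, h₂⟩ := mem_box.1 ha j
        rw [abs_mul, abs_of_pos (by omega : 0 < a j)]
        exact mul_le_mul_of_nonneg_left h₂ (abs_nonneg _)
    _ = (∑ j, |T i j|) * N := (sum_mul _ _ _).symm
    _ ≤ (∑ k, ∑ j, |T k j|) * N := mul_le_mul_of_nonneg_right hrow (Nat.cast_nonneg _)

theorem exists_mulVec_add_mem_box (T : Matrix (Fin r) (Fin r) ℤ) :
    ∃ C : ℕ, 0 < C ∧ ∀ N : ℕ, ∃ s : Fin r → ℤ, ∀ a ∈ box r N, T *ᵥ a + s ∈ box r (C * N) := by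
  set K := ∑ k, ∑ j, |T k j|
  have hK : 0 ≤ K := sum_nonneg fun _ _ => sum_nonneg fun _ _ => abs_nonneg _
  refine ⟨2 * K.toNat + 1, by omega, fun N => ⟨fun _ => K * N + 1, fun a ha => ?_⟩⟩
  refine mem_box.2 fun i => ?_
  obtain ⟨h₁, h₂⟩ := abs_le.1 (abs_mulVec_apply_le T ha i : |(T *ᵥ a) i| ≤ K * N)
  have hN : 1 ≤ (N : ℤ) := (mem_box.1 ha i).1.trans (mem_box.1 ha i).2
  push_cast [Pi.add_apply, Int.toNat_of_nonneg hK]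
  constructor <;> nlinarith

section IntegralAffine

variable {Q : Finset (Fin r → ℤ)} {T : Matrix (Fin r) (Fin r) ℤ} {L : ℤ} {w : Fin r → ℤ}

theorem smul_sub_eq_of_mulVec_add_eq (hT : Function.Injective T.mulVec) {d : ℤ}
    {s y p p' q q' a a' : Fin r → ℤ} (hq : L • q = T *ᵥ p + w) (hq' : L • q' = T *ᵥ p' + w)
    (ha : T *ᵥ a + s = y + d • q) (ha' : T *ᵥ a' + s = y + d • q') :
    L • (a - a') = d • (p - p') := by
  apply hT
  simp only [mulVec_smul, mulVec_sub]
  linear_combination (norm := module) L • ha - L • ha' + d • hq - d • hq'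

theorem exists_ncard_copies_image_le (hT : Function.Injective T.mulVec) (hL : L ≠ 0)
    (hPQ : ∀ p ∈ P, ∃ q ∈ Q, L • q = T *ᵥ p + w) (hp₀ : p₀ ∈ P) {g : ℕ}
    (hg : IsDilationModulus P p₀ g) {A : Finset (Fin r → ℤ)}
    (hA : ∀ a ∈ A, ∀ a' ∈ A, ∀ i, (g : ℤ) ∣ a i - a' i) (s : Fin r → ℤ) {d : ℤ} (hd : d ≠ 0) :
    ∃ θ ≠ 0, (copies Q (A.image (T *ᵥ · + s)) d).ncard ≤ (copies P A θ).ncard := by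
  set Y := copies Q (A.image (T *ᵥ · + s)) d
  rcases Y.eq_empty_or_nonempty with hY | ⟨y₀, hy₀⟩
  · exact ⟨1, one_ne_zero, by simp [hY]⟩
  choose! σ hσQ hσ using hPQ
  have hpre : ∀ y ∈ Y, ∀ p ∈ P, ∃ a ∈ A, T *ᵥ a + s = y + d • σ p :=
    fun y hy p hp => mem_image.1 (hy _ (hσQ p hp))
  -- any copy in the image pulls back to `P` dilated by `d / L`, which the modulus makes integral
  obtain ⟨θ, hθ, hθP⟩ : ∃ θ ≠ 0, ∀ p ∈ P, d • (p - p₀) = (L * θ) • (p - p₀) := by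
    obtain ⟨a₀, ha₀, ha₀y⟩ := hpre y₀ hy₀ p₀ hp₀
    refine hg L d hL hd fun p hp i => ?_
    obtain ⟨a, ha, hay⟩ := hpre y₀ hy₀ p hp
    have := congrFun (smul_sub_eq_of_mulVec_add_eq hT (hσ p hp) (hσ p₀ hp₀) hay ha₀y) i
    simp only [Pi.smul_apply, Pi.sub_apply, smul_eq_mul] at this
    rw [← this]
    exact mul_dvd_mul_left L (hA a ha a₀ ha₀ i)
  refine ⟨θ, hθ, ?_⟩
  have hY : Y ⊆ (fun x => T *ᵥ (x + θ • p₀) + s - d • σ p₀) '' copies P A θ := by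
    intro y hy
    obtain ⟨a₀, ha₀, ha₀y⟩ := hpre y hy p₀ hp₀
    refine ⟨a₀ - θ • p₀, fun p hp => ?_, by simp [ha₀y]⟩
    obtain ⟨a, ha, hay⟩ := hpre y hy p hp
    have hLa : L • (a - a₀) = L • θ • (p - p₀) := by
      rw [smul_sub_eq_of_mulVec_add_eq hT (hσ p hp) (hσ p₀ hp₀) hay ha₀y, hθP p hp, mul_smul]
    have hap := smul_right_injective (Fin r → ℤ) hL hLa
    convert ha using 1
    linear_combination (norm := module) -hap
  have hfin := finite_copies A θ hp₀
  calc Y.ncard ≤ (_ '' copies P A θ).ncard := Set.ncard_le_ncard hY (hfin.image _)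
    _ ≤ (copies P A θ).ncard := Set.ncard_image_le hfin

theorem exists_isCopyTransfer (hT : Function.Injective T.mulVec) (hL : L ≠ 0)
    (hPQ : ∀ p ∈ P, ∃ q ∈ Q, L • q = T *ᵥ p + w) (hp₀ : p₀ ∈ P) :
    ∃ C K : ℕ, 0 < C ∧ 0 < K ∧ IsCopyTransfer P Q C K := by
  obtain ⟨g, hg, hmod⟩ := exists_isDilationModulus P p₀
  obtain ⟨C, hC, hbox⟩ := exists_mulVec_add_mem_box T
  refine ⟨C, g ^ r, hC, pow_pos hg r, fun N A hA => ?_⟩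
  obtain ⟨A', hA'A, hcard, hA'⟩ := exists_subset_card_le_forall_dvd_sub A hg
  obtain ⟨s, hs⟩ := hbox N
  have hinj : Function.Injective (T *ᵥ · + s) := (add_left_injective s).comp hT
  refine ⟨A'.image (T *ᵥ · + s), ?_, by rwa [card_image_of_injective _ hinj], fun d hd => ?_⟩
  · rintro _ hb
    obtain ⟨a, ha, rfl⟩ := mem_image.1 hb
    exact hs a (hA (hA'A ha))
  · obtain ⟨θ, hθ, hle⟩ := exists_ncard_copies_image_le hT hL hPQ hp₀ hmod hA' s hd
    exact ⟨θ, hθ, hle.trans (Set.ncard_le_ncard (copies_mono hA'A θ) (finite_copies A θ hp₀))⟩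

end IntegralAffine

theorem exists_intCast_mulVec_add_eq_smul {M : Matrix (Fin r) (Fin r) ℚ} (hM : IsUnit M.det)
    (b : Fin r → ℚ) : ∃ (L : ℤ) (T : Matrix (Fin r) (Fin r) ℤ) (w : Fin r → ℤ), L ≠ 0 ∧
      Function.Injective T.mulVec ∧ ∀ p : Fin r → ℤ,
        (fun i => ((T *ᵥ p + w) i : ℚ)) = L • (M *ᵥ (fun i => (p i : ℚ)) + b) := by
  obtain ⟨⟨L, hL⟩, hz⟩ := IsLocalization.exist_integer_multiples_of_finite (nonZeroDivisors ℤ)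
    (Sum.elim (fun ij : Fin r × Fin r => M ij.1 ij.2) b)
  choose z hz using hz
  set T : Matrix (Fin r) (Fin r) ℤ := Matrix.of fun i j => z (.inl (i, j))
  set w : Fin r → ℤ := fun i => z (.inr i)
  have hcast : ∀ p : Fin r → ℤ,
      (fun i => ((T *ᵥ p + w) i : ℚ)) = L • (M *ᵥ (fun i => (p i : ℚ)) + b) := by
    intro p
    funext i
    have hT : ∀ j, (T i j : ℚ) = L * M i j := fun j => by simpa [T] using hz (.inl (i, j))
    have hw : (w i : ℚ) = L * b i := by simpa using hz (.inr i)
    simp [mulVec, dotProduct, hT, hw, mul_sum, mul_assoc]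
  have hL0 : L ≠ 0 := nonZeroDivisors.ne_zero hL
  refine ⟨L, T, w, hL0, fun v v' hvv' => ?_, hcast⟩
  have hM' : Function.Injective M.mulVec :=
    mulVec_injective_iff_isUnit.2 ((isUnit_iff_isUnit_det M).2 hM)
  have h := hcast v
  rw [hvv', hcast v'] at h
  have := hM' (add_right_cancel (smul_right_injective (Fin r → ℚ) hL0 h))
  exact funext fun i => Int.cast_injective (congrFun this i).symm

theorem exists_integral_affine_of_image_eq {P Q : Finset (Fin r → ℤ)}
    {M : Matrix (Fin r) (Fin r) ℚ} (hM : IsUnit M.det) {b : Fin r → ℚ}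
    (hPQ : (fun p : Fin r → ℤ => M *ᵥ (fun i => (p i : ℚ)) + b) '' (P : Set (Fin r → ℤ))
        = (fun q : Fin r → ℤ => fun i => (q i : ℚ)) '' (Q : Set (Fin r → ℤ))) :
    ∃ (L : ℤ) (T : Matrix (Fin r) (Fin r) ℤ) (w : Fin r → ℤ), L ≠ 0 ∧
      Function.Injective T.mulVec ∧ ∀ p ∈ P, ∃ q ∈ Q, L • q = T *ᵥ p + w := by
  obtain ⟨L, T, w, hL, hT, hcast⟩ := exists_intCast_mulVec_add_eq_smul hM b
  refine ⟨L, T, w, hL, hT, fun p hp => ?_⟩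
  obtain ⟨q, hq, hqp⟩ := hPQ.subset ⟨p, hp, rfl⟩
  refine ⟨q, hq, funext fun i => ?_⟩
  have := congrFun (hcast p) i
  simp only at hqp
  rw [← hqp] at this
  simp only [Pi.smul_apply, zsmul_eq_mul, smul_eq_mul] at this ⊢
  exact_mod_cast this.symm

end PopularDifference

open PopularDifference in
theorem stmt7 (r : ℕ) (P Q : Finset (Fin r → ℤ))
    (M : Matrix (Fin r) (Fin r) ℚ) (hM : IsUnit M.det) (b : Fin r → ℚ)
    (hPQ : (fun p : Fin r → ℤ => M.mulVec (fun i => ((p i : ℚ))) + b) '' (↑P : Set (Fin r → ℤ))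
        = (fun q : Fin r → ℤ => fun i => ((q i : ℚ))) '' (↑Q : Set (Fin r → ℤ))) :
    ∃ c : ℝ, 0 < c ∧ c < 1 ∧
      ∀ α : ℝ, 0 < α → α < 1 → pdd r Q (c * α) ≤ pdd r P α := by
  rcases P.eq_empty_or_nonempty with rfl | ⟨p₀, hp₀⟩
  · obtain rfl : Q = ∅ := by simpa using hPQ.symm
    exact ⟨1 / 2, by norm_num, by norm_num, fun α hα hα₁ =>
      pdd_le_pdd hα₁.le (pddSet_mono (by linarith))⟩
  obtain ⟨L, T, w, hL, hT, hPQ'⟩ := exists_integral_affine_of_image_eq hM hPQ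
  obtain ⟨C, K, hC, hK, htr⟩ := exists_isCopyTransfer hT hL hPQ' hp₀
  have hKC : (1 : ℝ) ≤ K * C ^ r :=
    one_le_mul_of_one_le_of_one_le (by exact_mod_cast hK) (one_le_pow₀ (by exact_mod_cast hC))
  refine ⟨(2 * (K * C ^ r))⁻¹, by positivity, inv_lt_one_of_one_lt₀ (by linarith),
    fun α _ hα₁ => pdd_le_pdd hα₁.le (pddSet_subset_of_isCopyTransfer htr hC (by positivity) ?_ α)⟩
  rw [inv_mul_le_iff₀ (by positivity)]
  linarith
end

section
/- Let m1, m2, m3, m4 be positive integers. Then there exist nonzero complex numbers A, B, C with B/A ∉ ℝ such that BC(B − C) = m2·m3, CA(C − A) = m1·m4, and AB(A − B) = m1·m2. -/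
/-!
Writing `a, b, c` for the three right-hand sides, the identity
`A B C ((B - C) + (C - A) + (A - B)) = 0` forces `a A + b B + c C = 0`, and conversely on that
plane the third equation follows from the other two. Normalising `A = 1` and eliminating `C`,
the ratio of the first two equations becomes the quadratic `b (b + c) B² + 2 a b B + a (a + c) = 0`,
whose discriminant `-4 a b c (a + b + c)` is negative; so `B` is non-real, and a cube-root rescaling
of `(1, B, C)` fixes the common value of the cubics.
-/

open Complex

theorem mul_mul_sub_eq_of_linear_relation {K : Type*} [Field K] {a b c A B C : K} (hC : C ≠ 0)
    (hlin : a * A + b * B + c * C = 0) (hBC : B * C * (B - C) = a) (hCA : C * A * (C - A) = b) :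
    A * B * (A - B) = c :=
  mul_right_cancel₀ hC <| by linear_combination -A * hBC - B * hCA - hlin

theorem exists_im_ne_zero_quadratic_eq_zero {p q r : ℝ} (hp : p ≠ 0) (hdisc : q ^ 2 < p * r) :
    ∃ z : ℂ, z.im ≠ 0 ∧ p * z ^ 2 + 2 * q * z + r = 0 := by
  set s := √(p * r - q ^ 2)
  have hs : 0 < s := Real.sqrt_pos.2 (by linarith)
  have hs2 : (s : ℂ) ^ 2 = p * r - q ^ 2 := by
    exact_mod_cast Real.sq_sqrt (by linarith : 0 ≤ p * r - q ^ 2)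
  refine ⟨(-q + s * I) / p, ?_, ?_⟩
  · simpa [div_im] using div_ne_zero hs.ne' hp
  · have hp' : (p : ℂ) ≠ 0 := ofReal_ne_zero.2 hp
    field_simp
    linear_combination (s : ℂ) ^ 2 * I_sq - hs2

theorem exists_affine_cyclic_cubic_solution {a b c : ℝ} (ha : 0 < a) (hb : 0 < b) (hc : 0 < c) :
    ∃ z w : ℂ, z.im ≠ 0 ∧ z * w * (z - w) ≠ 0 ∧ a * 1 + b * z + c * w = 0 ∧
      a * (w * (w - 1)) = b * (z * w * (z - w)) := by
  obtain ⟨z, hz, hquad⟩ := exists_im_ne_zero_quadratic_eq_zero (p := b * (b + c)) (q := a * b)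
    (r := a * (a + c)) (by positivity) (by nlinarith [mul_pos (mul_pos ha hb) hc])
  push_cast at hquad
  have hc' : (c : ℂ) ≠ 0 := ofReal_ne_zero.2 hc.ne'
  obtain ⟨w, hw⟩ : ∃ w : ℂ, c * w = -(a + b * z) := ⟨-(a + b * z) / c, mul_div_cancel₀ _ hc'⟩
  have hwim : c * w.im = -(b * z.im) := by simpa using congrArg im hw
  have hz0 : z ≠ 0 := fun h => hz (by simp [h])
  have hw0 : w ≠ 0 := fun h => by
    simp only [h, zero_im, mul_zero] at hwim
    exact hz (by nlinarith)
  have hzw : z - w ≠ 0 := fun h => by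
    rw [← sub_eq_zero.1 h] at hwim
    exact hz (by nlinarith)
  refine ⟨z, w, hz, mul_ne_zero (mul_ne_zero hz0 hw0) hzw, by linear_combination hw,
    mul_left_cancel₀ hc' ?_⟩
  linear_combination w * (a + b * z) * hw - w * hquad

theorem exists_cyclic_cubic_system {a b c : ℝ} (ha : 0 < a) (hb : 0 < b) (hc : 0 < c) :
    ∃ A B C : ℂ, A ≠ 0 ∧ B ≠ 0 ∧ C ≠ 0 ∧ (B / A).im ≠ 0 ∧
      B * C * (B - C) = a ∧ C * A * (C - A) = b ∧ A * B * (A - B) = c := by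
  obtain ⟨z, w, hz, hx, hlin, hratio⟩ := exists_affine_cyclic_cubic_solution ha hb hc
  have hz0 : z ≠ 0 := left_ne_zero_of_mul (left_ne_zero_of_mul hx)
  have hw0 : w ≠ 0 := right_ne_zero_of_mul (left_ne_zero_of_mul hx)
  obtain ⟨t, ht⟩ := IsAlgClosed.exists_pow_nat_eq ((a : ℂ) / (z * w * (z - w))) three_pos
  have ht0 : t ≠ 0 := by
    rintro rfl
    exact div_ne_zero (ofReal_ne_zero.2 ha.ne') hx (by simpa using ht.symm)
  have hBC : t * z * (t * w) * (t * z - t * w) = a := by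
    rw [show t * z * (t * w) * (t * z - t * w) = t ^ 3 * (z * w * (z - w)) by ring, ht,
      div_mul_cancel₀ _ hx]
  have hCA : t * w * t * (t * w - t) = b := by
    have hb' : (b : ℂ) = a * (w * (w - 1)) / (z * w * (z - w)) := by
      rw [hratio, mul_div_cancel_right₀ _ hx]
    rw [hb', show t * w * t * (t * w - t) = t ^ 3 * (w * (w - 1)) by ring, ht]
    ring
  refine ⟨t, t * z, t * w, ht0, mul_ne_zero ht0 hz0, mul_ne_zero ht0 hw0, ?_, hBC, hCA,
    mul_mul_sub_eq_of_linear_relation (mul_ne_zero ht0 hw0) ?_ hBC hCA⟩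
  · rwa [mul_div_cancel_left₀ _ ht0]
  · linear_combination t * hlin

theorem stmt9 (m1 m2 m3 m4 : ℕ) (h1 : 0 < m1) (h2 : 0 < m2) (h3 : 0 < m3) (h4 : 0 < m4) :
    ∃ A B C : ℂ, A ≠ 0 ∧ B ≠ 0 ∧ C ≠ 0 ∧ (B / A).im ≠ 0 ∧
      B * C * (B - C) = (m2 : ℂ) * (m3 : ℂ) ∧
      C * A * (C - A) = (m1 : ℂ) * (m4 : ℂ) ∧
      A * B * (A - B) = (m1 : ℂ) * (m2 : ℂ) := by
  obtain ⟨A, B, C, hA, hB, hC, him, hBC, hCA, hAB⟩ :=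
    exists_cyclic_cubic_system (a := m2 * m3) (b := m1 * m4) (c := m1 * m2)
      (by positivity) (by positivity) (by positivity)
  push_cast at hBC hCA hAB
  exact ⟨A, B, C, hA, hB, hC, him, hBC, hCA, hAB⟩
end

section
/- Let m1, m2, m3, m4 be positive integers and let A, B, C be nonzero complex numbers satisfying BC(B − C) = m2·m3, CA(C − A) = m1·m4, and AB(A − B) = m1·m2. Define f : ℂ × ℂ → ℂ by f(x, y) = (m2·A·x + m1·B·y)² / A. Then for all integers n1, n2, d: m2·m3·f(n1 + m1·d, n2) + m1·m4·f(n1, n2 + m2·d) + m1·m2·f(n1 − m3·d, n2 − m4·d) = (m2·m3 + m1·m4 + m1·m2)·f(n1, n2). -/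
/-! The form `f` is `ℓ² / A` for the linear form `ℓ(x, y) = m₂ A x + m₁ B y`. For a square of a
linear form, a weighted sum of translates equals the total weight times the value at the centre as
soon as the weighted first and second moments of the translation increments `ℓ(vᵢ)` vanish. The
first moment vanishes identically in `m₁, …, m₄`. Writing `p, q, r` for the weights, the
hypotheses express them as `p = BC(B - C)`, `q = CA(C - A)`, `r = AB(A - B)`, which satisfy
`pA + qB + rC = 0` and `pA² + qB² + rC² = 0`; these two relations kill the second moment. -/

section Moments

variable {R : Type*} [CommRing R]

theorem weighted_sum_sq_add_eq (w₁ w₂ w₃ a b₁ b₂ b₃ : R)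
    (h₁ : w₁ * b₁ + w₂ * b₂ + w₃ * b₃ = 0) (h₂ : w₁ * b₁ ^ 2 + w₂ * b₂ ^ 2 + w₃ * b₃ ^ 2 = 0) :
    w₁ * (a + b₁) ^ 2 + w₂ * (a + b₂) ^ 2 + w₃ * (a + b₃) ^ 2 = (w₁ + w₂ + w₃) * a ^ 2 := by
  linear_combination 2 * a * h₁ + h₂

theorem cyclic_weights_first_moment (A B C : R) :
    B * C * (B - C) * A + C * A * (C - A) * B + A * B * (A - B) * C = 0 := by
  ring

theorem cyclic_weights_second_moment (A B C : R) :
    B * C * (B - C) * A ^ 2 + C * A * (C - A) * B ^ 2 + A * B * (A - B) * C ^ 2 = 0 := by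
  ring

theorem weighted_sum_sq_eq_zero_of_moments (p q r A B C : R)
    (h₁ : p * A + q * B + r * C = 0) (h₂ : p * A ^ 2 + q * B ^ 2 + r * C ^ 2 = 0) :
    p * (r * A) ^ 2 + q * (r * B) ^ 2 + r * (p * A + q * B) ^ 2 = 0 := by
  linear_combination r ^ 2 * h₂ + r * (p * A + q * B - r * C) * h₁

end Moments

theorem stmt10_general (m1 m2 m3 m4 : ℕ)
    (A B C : ℂ)
    (e1 : B * C * (B - C) = (m2 : ℂ) * (m3 : ℂ))
    (e2 : C * A * (C - A) = (m1 : ℂ) * (m4 : ℂ))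
    (e3 : A * B * (A - B) = (m1 : ℂ) * (m2 : ℂ))
    (f : ℂ → ℂ → ℂ)
    (hf : ∀ x y : ℂ, f x y = ((m2 : ℂ) * A * x + (m1 : ℂ) * B * y) ^ 2 / A) :
    ∀ n1 n2 d : ℤ,
      (m2 : ℂ) * (m3 : ℂ) * f ((n1 : ℂ) + (m1 : ℂ) * (d : ℂ)) (n2 : ℂ) +
        (m1 : ℂ) * (m4 : ℂ) * f (n1 : ℂ) ((n2 : ℂ) + (m2 : ℂ) * (d : ℂ)) +
        (m1 : ℂ) * (m2 : ℂ) * f ((n1 : ℂ) - (m3 : ℂ) * (d : ℂ)) ((n2 : ℂ) - (m4 : ℂ) * (d : ℂ)) =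
      ((m2 : ℂ) * (m3 : ℂ) + (m1 : ℂ) * (m4 : ℂ) + (m1 : ℂ) * (m2 : ℂ)) * f (n1 : ℂ) (n2 : ℂ) := by
  intro n1 n2 d
  set p : ℂ := (m2 : ℂ) * (m3 : ℂ)
  set q : ℂ := (m1 : ℂ) * (m4 : ℂ)
  set r : ℂ := (m1 : ℂ) * (m2 : ℂ)
  have first : p * A + q * B + r * C = 0 := by
    rw [← e1, ← e2, ← e3]; exact cyclic_weights_first_moment A B C
  have second : p * A ^ 2 + q * B ^ 2 + r * C ^ 2 = 0 := by
    rw [← e1, ← e2, ← e3]; exact cyclic_weights_second_moment A B C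
  have translates := weighted_sum_sq_add_eq p q r ((m2 : ℂ) * A * n1 + (m1 : ℂ) * B * n2)
    (r * A * d) (r * B * d) (-(p * A + q * B) * d) (by ring)
    (by linear_combination (d : ℂ) ^ 2 * weighted_sum_sq_eq_zero_of_moments p q r A B C first second)
  simp only [hf, div_eq_mul_inv]
  linear_combination A⁻¹ * translates

theorem stmt10 (m1 m2 m3 m4 : ℕ) (h1 : 0 < m1) (h2 : 0 < m2) (h3 : 0 < m3) (h4 : 0 < m4)
    (A B C : ℂ) (hA : A ≠ 0) (hB : B ≠ 0) (hC : C ≠ 0)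
    (e1 : B * C * (B - C) = (m2 : ℂ) * (m3 : ℂ))
    (e2 : C * A * (C - A) = (m1 : ℂ) * (m4 : ℂ))
    (e3 : A * B * (A - B) = (m1 : ℂ) * (m2 : ℂ))
    (f : ℂ → ℂ → ℂ)
    (hf : ∀ x y : ℂ, f x y = ((m2 : ℂ) * A * x + (m1 : ℂ) * B * y) ^ 2 / A) :
    ∀ n1 n2 d : ℤ,
      (m2 : ℂ) * (m3 : ℂ) * f ((n1 : ℂ) + (m1 : ℂ) * (d : ℂ)) (n2 : ℂ) +
        (m1 : ℂ) * (m4 : ℂ) * f (n1 : ℂ) ((n2 : ℂ) + (m2 : ℂ) * (d : ℂ)) +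
        (m1 : ℂ) * (m2 : ℂ) * f ((n1 : ℂ) - (m3 : ℂ) * (d : ℂ)) ((n2 : ℂ) - (m4 : ℂ) * (d : ℂ)) =
      ((m2 : ℂ) * (m3 : ℂ) + (m1 : ℂ) * (m4 : ℂ) + (m1 : ℂ) * (m2 : ℂ)) * f (n1 : ℂ) (n2 : ℂ) :=
  stmt10_general m1 m2 m3 m4 A B C e1 e2 e3 f hf
end

section
/- Let m1, m2, m3, m4 be positive integers. There exists a constant c > 0 (depending on m1, m2, m3, m4) such that for every integer L > 0 there exists a subset Λ ⊆ {0, 1, …, L − 1} with |Λ| ≥ L·exp(−c·√(log L)) such that the only quadruples (x, y, z, w) ∈ Λ⁴ satisfying m2·m3·x + m1·m4·y + m1·m2·z = (m2·m3 + m1·m4 + m1·m2)·w are those with x = y = z = w. -/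
/-!
Behrend's construction. Take the integers whose base-`(a + b + c) d` digits are all `< d` and
whose digit vectors lie on one sphere `∑ xᵢ² = k`. The digits of `a x + b y + c z` are
`< (a + b + c) d`, so the equation holds digit by digit, and a point of a sphere that is a
strictly positive weighted mean of three points of the same sphere coincides with all of them.
By pigeonhole some sphere carries a `1 / (n d²)` fraction of the `dⁿ` vectors; taking
`n ≈ √(log L)` and `d ≈ L^(1/n) / (a + b + c)` gives density `exp (-c √(log L))`.
-/

open Finset Real

def OnlyTrivialSolutions (a b c : ℕ) (Λ : Finset ℕ) : Prop :=
  ∀ x ∈ Λ, ∀ y ∈ Λ, ∀ z ∈ Λ, ∀ w ∈ Λ,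
    a * x + b * y + c * z = (a + b + c) * w → x = w ∧ y = w ∧ z = w

lemma onlyTrivialSolutions_singleton (a b c n : ℕ) : OnlyTrivialSolutions a b c {n} := by
  simp [OnlyTrivialSolutions]

lemma eq_of_weighted_mean_of_sum_sq_eq {ι R : Type*} [Fintype ι] [CommRing R] [LinearOrder R]
    [IsStrictOrderedRing R] {a b c : R} (ha : 0 < a) (hb : 0 < b) (hc : 0 < c)
    {x y z w : ι → R} (h : ∀ i, a * x i + b * y i + c * z i = (a + b + c) * w i)
    (hx : ∑ i, x i ^ 2 = ∑ i, w i ^ 2) (hy : ∑ i, y i ^ 2 = ∑ i, w i ^ 2)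
    (hz : ∑ i, z i ^ 2 = ∑ i, w i ^ 2) : x = w ∧ y = w ∧ z = w := by
  set Q : ι → R := fun i ↦
    a * b * (x i - y i) ^ 2 + a * c * (x i - z i) ^ 2 + b * c * (y i - z i) ^ 2
  -- Lagrange's identity for weighted sums of squares
  have hQ i : Q i = (a + b + c) *
      (a * x i ^ 2 + b * y i ^ 2 + c * z i ^ 2 - (a + b + c) * w i ^ 2) := by
    linear_combination (-(a * x i + b * y i + c * z i + (a + b + c) * w i)) * h i
  have hQ_sum : ∑ i, Q i = 0 := by
    simp only [hQ, ← mul_sum, sum_sub_distrib, sum_add_distrib, hx, hy, hz]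
    ring
  have hQ_zero := (sum_eq_zero_iff_of_nonneg fun i _ ↦ by positivity).1 hQ_sum
  have hxy i : x i = y i ∧ x i = z i := by
    have hsum := hQ_zero i (mem_univ i)
    have hxy₀ : 0 ≤ a * b * (x i - y i) ^ 2 := by positivity
    have hxz₀ : 0 ≤ a * c * (x i - z i) ^ 2 := by positivity
    have hyz₀ : 0 ≤ b * c * (y i - z i) ^ 2 := by positivity
    constructor
    · have : a * b * (x i - y i) ^ 2 = 0 := by linarith
      simpa [ha.ne', hb.ne', sub_eq_zero] using this
    · have : a * c * (x i - z i) ^ 2 = 0 := by linarith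
      simpa [ha.ne', hc.ne', sub_eq_zero] using this
  have hxw i : x i = w i := by
    have := h i
    rw [← (hxy i).1, ← (hxy i).2, ← add_mul, ← add_mul] at this
    exact mul_left_cancel₀ (by positivity) this
  refine ⟨funext hxw, funext fun i ↦ ?_, funext fun i ↦ ?_⟩
  · rw [← (hxy i).1, hxw]
  · rw [← (hxy i).2, hxw]

namespace Behrend

variable {n d : ℕ}

lemma map_lt_pow {K : ℕ} {x : Fin n → ℕ} (hx : ∀ i, x i < K) : map K x < K ^ n := by
  have := (finFunctionFinEquiv fun i ↦ (⟨x i, hx i⟩ : Fin K)).isLt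
  rwa [finFunctionFinEquiv_apply] at this

lemma digits_eq_of_map_eq {a b c : ℕ} (hs : 0 < a + b + c) {x y z w : Fin n → ℕ}
    (hx : x ∈ box n d) (hy : y ∈ box n d) (hz : z ∈ box n d) (hw : w ∈ box n d)
    (h : a * map ((a + b + c) * d) x + b * map ((a + b + c) * d) y + c * map ((a + b + c) * d) z =
      (a + b + c) * map ((a + b + c) * d) w) (i : Fin n) :
    a * x i + b * y i + c * z i = (a + b + c) * w i := by
  rw [mem_box] at hx hy hz hw
  have hdigit {p q r : ℕ} (hp : p < d) (hq : q < d) (hr : r < d) :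
      a * p + b * q + c * r < (a + b + c) * d := by
    nlinarith
  simp only [← smul_eq_mul, ← map_nsmul, ← map_add] at h
  have := map_injOn (d := (a + b + c) * d)
    (x₁ := a • x + b • y + c • z) (x₂ := (a + b + c) • w)
    (fun i ↦ hdigit (hx i) (hy i) (hz i))
    (fun i ↦ by simpa [add_mul] using hdigit (hw i) (hw i) (hw i)) h
  simpa using congrFun this i

lemma exists_large_onlyTrivialSolutions {a b c : ℕ} (ha : 0 < a) (hb : 0 < b) (hc : 0 < c)
    (n d : ℕ) : ∃ Λ : Finset ℕ, Λ ⊆ range (((a + b + c) * d) ^ n) ∧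
      ((d ^ n :) / (n * d ^ 2 :) : ℝ) ≤ #Λ ∧ OnlyTrivialSolutions a b c Λ := by
  obtain ⟨k, hk⟩ := exists_large_sphere n d
  set K := (a + b + c) * d
  have hdigit {x : Fin n → ℕ} (hx : x ∈ sphere n d k) (i : Fin n) : x i < K :=
    (mem_box.1 (sphere_subset_box hx) i).trans_le (Nat.le_mul_of_pos_left d (by omega))
  have hinj : Set.InjOn (map K) (sphere n d k) := fun x hx y hy ↦
    map_injOn (hdigit hx) (hdigit hy)
  refine ⟨(sphere n d k).image (map K), ?_, ?_, ?_⟩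
  · simp only [subset_iff, mem_image, mem_range, forall_exists_index, and_imp]
    rintro _ x hx rfl
    exact map_lt_pow (hdigit hx)
  · rwa [card_image_of_injOn hinj]
  · simp only [OnlyTrivialSolutions, mem_image, forall_exists_index, and_imp]
    rintro _ x hx rfl _ y hy rfl _ z hz rfl _ w hw rfl h
    have hsq {v : Fin n → ℕ} (hv : v ∈ sphere n d k) :
        ∑ i, ((v i : ℕ) : ℤ) ^ 2 = k := by
      exact_mod_cast (mem_filter.1 hv).2
    have hpt (i : Fin n) : (a : ℤ) * x i + b * y i + c * z i = (a + b + c) * w i := by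
      exact_mod_cast digits_eq_of_map_eq (by omega) (sphere_subset_box hx)
        (sphere_subset_box hy) (sphere_subset_box hz) (sphere_subset_box hw) h i
    obtain ⟨hxw, hyw, hzw⟩ := eq_of_weighted_mean_of_sum_sq_eq
      (x := fun i ↦ (x i : ℤ)) (y := fun i ↦ (y i : ℤ)) (z := fun i ↦ (z i : ℤ))
      (w := fun i ↦ (w i : ℤ))
      (by positivity) (by positivity) (by positivity) hpt
      (by rw [hsq hx, hsq hw]) (by rw [hsq hy, hsq hw]) (by rw [hsq hz, hsq hw])
    have hcast := (Nat.cast_injective (R := ℤ)).comp_left (α := Fin n)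
    rw [hcast hxw, hcast hyw, hcast hzw]
    exact ⟨rfl, rfl, rfl⟩

end Behrend

lemma mul_exp_neg_mul_sqrt_log_le_one {x C : ℝ} (hx : 1 ≤ x) (hC : √(log x) ≤ C) :
    x * exp (-C * √(log x)) ≤ 1 := by
  have hlog : √(log x) ^ 2 = log x := sq_sqrt (log_nonneg hx)
  calc x * exp (-C * √(log x)) = exp (√(log x) * (√(log x) - C)) := by
        rw [← exp_log (by linarith : 0 < x), ← exp_add, exp_log (by linarith)]
        congr 1
        linear_combination -hlog
    _ ≤ 1 := exp_le_one_iff.2 (mul_nonpos_of_nonneg_of_nonpos (sqrt_nonneg _) (by linarith))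

lemma sub_one_le_sq_div_natCeil {r : ℝ} (hr : 0 < r) : r - 1 ≤ r ^ 2 / ⌈r⌉₊ := by
  have hn : (⌈r⌉₊ : ℝ) < r + 1 := Nat.ceil_lt_add_one hr.le
  have hn' : r ≤ ⌈r⌉₊ := Nat.le_ceil r
  rw [le_div_iff₀ (by linarith)]
  nlinarith

lemma sq_div_natCeil_le {r : ℝ} (hr : 0 < r) : r ^ 2 / ⌈r⌉₊ ≤ r := by
  rw [div_le_iff₀ (by simpa using hr), sq]
  exact mul_le_mul_of_nonneg_left (Nat.le_ceil r) hr.le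

lemma exists_pow_le_and_le_div (s : ℕ) (hs : 0 < s) {L : ℕ} (hL : 0 < L)
    (hr : 3 + 2 * log (2 * s) < √(log L)) :
    ∃ n d : ℕ, (s * d) ^ n ≤ L ∧
      L * exp (-(3 + 2 * log (2 * s)) * √(log L)) ≤ ((d ^ n :) / (n * d ^ 2 :) : ℝ) := by
  set r := √(log L)
  set σ : ℝ := (s : ℝ)
  have hσ : 1 ≤ σ := Nat.one_le_cast.2 hs
  have hlogσ : 0 ≤ log (2 * σ) := log_nonneg (by linarith)
  have hr1 : 1 ≤ r := by linarith
  set n := ⌈r⌉₊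
  have hn : (n : ℝ) ≤ r + 1 := (Nat.ceil_lt_add_one (by linarith)).le
  have hn0 : (0 : ℝ) < n := by simpa [n] using (by linarith : 0 < r)
  set t := exp (r ^ 2 / n)
  have ht_pow : t ^ n = L := by
    rw [← exp_nat_mul, mul_div_cancel₀ _ hn0.ne', sq_sqrt (log_nonneg (Nat.one_le_cast.2 hL)),
      exp_log (Nat.cast_pos.2 hL)]
  have ht_le : t ≤ exp r := exp_le_exp.2 (sq_div_natCeil_le (by linarith))
  have ht_ge : 2 * σ ≤ t := by
    calc 2 * σ = exp (log (2 * σ)) := (exp_log (by linarith)).symm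
      _ ≤ t := exp_le_exp.2 (by linarith [sub_one_le_sq_div_natCeil (by linarith : 0 < r)])
  set d := ⌊t / σ⌋₊
  have hd_le : σ * d ≤ t := by
    rw [← le_div_iff₀' (by linarith)]
    exact Nat.floor_le (by positivity)
  have hd_ge : t / (2 * σ) ≤ d := by
    have := Nat.sub_one_lt_floor (t / σ)
    have : 2 ≤ t / σ := by rw [le_div_iff₀ (by linarith)]; linarith
    have : t / σ = 2 * (t / (2 * σ)) := by field_simp
    linarith
  have hd1 : (1 : ℝ) ≤ d := le_trans (by rw [le_div_iff₀ (by linarith)]; linarith) hd_ge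
  refine ⟨n, d, ?_, ?_⟩
  · have : ((s * d) ^ n : ℝ) ≤ L := ht_pow ▸ pow_le_pow_left₀ (by positivity) hd_le n
    exact_mod_cast this
  have hL_le : (L : ℝ) ≤ exp (2 * log (2 * σ) * r) * d ^ n := by
    calc (L : ℝ) = t ^ n := ht_pow.symm
      _ ≤ (2 * σ * d) ^ n := pow_le_pow_left₀ (by positivity)
          (by rwa [div_le_iff₀' (by linarith)] at hd_ge) n
      _ = exp (n * log (2 * σ)) * d ^ n := by rw [mul_pow, exp_nat_mul, exp_log (by linarith)]
      _ ≤ exp (2 * log (2 * σ) * r) * d ^ n :=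
          mul_le_mul_of_nonneg_right (exp_le_exp.2 (by nlinarith)) (by positivity)
  have hnd_le : (n * d ^ 2 : ℝ) ≤ exp (3 * r) := by
    calc (n * d ^ 2 : ℝ) ≤ exp r * exp r ^ 2 := by
          gcongr
          · linarith [add_one_le_exp r]
          · exact ((le_mul_of_one_le_left (Nat.cast_nonneg _) hσ).trans hd_le).trans ht_le
      _ = exp (3 * r) := by rw [← exp_nat_mul, ← exp_add]; ring_nf
  push_cast
  rw [le_div_iff₀ (by positivity)]
  calc L * exp (-(3 + 2 * log (2 * σ)) * r) * (n * d ^ 2)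
      ≤ exp (2 * log (2 * σ) * r) * d ^ n * exp (-(3 + 2 * log (2 * σ)) * r) * exp (3 * r) := by
        gcongr
    _ = d ^ n * exp (2 * log (2 * σ) * r + -(3 + 2 * log (2 * σ)) * r + 3 * r) := by
        rw [exp_add, exp_add]
        ring
    _ = d ^ n := by ring_nf; simp

theorem stmt11 (m1 m2 m3 m4 : ℕ) (h1 : 0 < m1) (h2 : 0 < m2) (h3 : 0 < m3) (h4 : 0 < m4) :
    ∃ c : ℝ, 0 < c ∧
      ∀ L : ℕ, 0 < L →
        ∃ Λ : Finset ℕ, Λ ⊆ Finset.range L ∧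
          (L : ℝ) * Real.exp (-c * Real.sqrt (Real.log L)) ≤ Λ.card ∧
          ∀ x ∈ Λ, ∀ y ∈ Λ, ∀ z ∈ Λ, ∀ w ∈ Λ,
            m2 * m3 * x + m1 * m4 * y + m1 * m2 * z = (m2 * m3 + m1 * m4 + m1 * m2) * w →
            x = w ∧ y = w ∧ z = w := by
  set s := m2 * m3 + m1 * m4 + m1 * m2
  have hs : 0 < s := by positivity
  have hlog : 0 ≤ log (2 * s) := log_nonneg (by norm_cast; omega)
  refine ⟨3 + 2 * log (2 * s), by positivity, fun L hL ↦ ?_⟩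
  by_cases hr : 3 + 2 * log (2 * s) < √(log L)
  · obtain ⟨n, d, hsd, hcard⟩ := exists_pow_le_and_le_div s hs hL hr
    obtain ⟨Λ, hΛ, hΛcard, hΛsol⟩ := Behrend.exists_large_onlyTrivialSolutions
      (by positivity : 0 < m2 * m3) (by positivity : 0 < m1 * m4) (by positivity : 0 < m1 * m2) n d
    exact ⟨Λ, hΛ.trans (range_subset_range.2 hsd), hcard.trans hΛcard, hΛsol⟩
  · refine ⟨{0}, by simpa using hL, ?_, onlyTrivialSolutions_singleton _ _ _ 0⟩
    simpa using mul_exp_neg_mul_sqrt_log_le_one (Nat.one_le_cast.2 hL) (not_lt.1 hr)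
end

section
/- Let m1, m2, m3, m4 be positive integers, let m = m2·m3 + m1·m4 + m1·m2, and let A, B, C be nonzero complex numbers with B/A ∉ ℝ satisfying BC(B − C) = m2·m3, CA(C − A) = m1·m4, AB(A − B) = m1·m2. Define f(x, y) = (m2·A·x + m1·B·y)²/A. Let L be a positive integer, let Λ ⊆ {0, 1, …, L − 1} be a set such that the only quadruples (x, y, z, w) ∈ Λ⁴ with m2·m3·x + m1·m4·y + m1·m2·z = m·w have x = y = z = w, and let ψ ∈ ℂ. For j = (j1, j2) ∈ Λ², let I_j = {t1·A + t2·B : t1 ∈ [j1/(mL), j1/(mL) + 1/(m²L)), t2 ∈ [j2/(mL), j2/(mL) + 1/(m²L))} ⊆ ℂ. Let n1, n2, d ∈ ℤ and set w = ψ·f(n1, n2), x = ψ·f(n1 + m1·d, n2), y = ψ·f(n1, n2 + m2·d), z = ψ·f(n1 − m3·d, n2 − m4·d). Suppose each of w, x, y, z is congruent modulo the lattice Aℤ + Bℤ to an element of ∪_{j ∈ Λ²} I_j. Then ‖2·m1·m2·(m2·A·n1 + m1·B·n2)·d·ψ + m1²·m2²·A·d²·ψ‖_{A,B} < 1/(m²·L).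 -/
/-!
With `u = m2·A·n1 + m1·B·n2`, the four arguments of `ψ f` are `ψ(u + m1m2·A·d)²/A`,
`ψ(u + m1m2·B·d)²/A`, `ψ(u − (m2m3·A + m1m4·B)·d)²/A` and `ψu²/A`, and the relations between
`A, B, C` make them satisfy the linear relation `m2m3·x + m1m4·y + m1m2·z = m·w`. Reading it in
the real coordinates along `A` and `B`, the boxes are so short (`1/(m²L)`, against spacing
`1/(mL)`) that no carry occurs: the box indices satisfy the same relation, so by the hypothesis
on `Λ` the points `x` and `w` lie in the same box modulo the lattice. Their difference, which is
the expression of the theorem, is then within `1/(m²L)` of the lattice in both coordinates.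
-/

/-- The distance from a real number to the nearest integer. -/
noncomputable def distToInt (t : ℝ) : ℝ := |t - round t|

/-- `w : ℂ` is congruent, modulo the lattice `Aℤ + Bℤ`, to an element of the box
`I_{(j1,j2)} = A·[j1/(mL), j1/(mL) + 1/(m²L)) + B·[j2/(mL), j2/(mL) + 1/(m²L))`
for some `(j1, j2) ∈ Λ²`. -/
def InBoxMod (A B : ℂ) (m L : ℕ) (Λ : Finset ℕ) (w : ℂ) : Prop :=
  ∃ j1 ∈ Λ, ∃ j2 ∈ Λ, ∃ a b : ℤ, ∃ t1 t2 : ℝ,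
    t1 ∈ Set.Ico ((j1 : ℝ) / (m * L)) ((j1 : ℝ) / (m * L) + 1 / ((m : ℝ) ^ 2 * L)) ∧
    t2 ∈ Set.Ico ((j2 : ℝ) / (m * L)) ((j2 : ℝ) / (m * L) + 1 / ((m : ℝ) ^ 2 * L)) ∧
    w = (t1 : ℂ) * A + (t2 : ℂ) * B + (a : ℂ) * A + (b : ℂ) * B

open Set

def boxSide (m L j : ℕ) : Set ℝ :=
  Ico ((j : ℝ) / (m * L)) ((j : ℝ) / (m * L) + 1 / ((m : ℝ) ^ 2 * L))

theorem weighted_sum_sq_shifts_eq (A B C u d α β γ : ℂ) (hα : B * C * (B - C) = α)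
    (hβ : C * A * (C - A) = β) (hγ : A * B * (A - B) = γ) :
    α * (u + γ * A * d) ^ 2 + β * (u + γ * B * d) ^ 2 + γ * (u - (α * A + β * B) * d) ^ 2
      = (α + β + γ) * u ^ 2 := by
  subst hα hβ hγ
  ring

theorem ofReal_mul_add_ofReal_mul_inj {A B : ℂ} (hBA : (B / A).im ≠ 0) {r₁ r₂ s₁ s₂ : ℝ}
    (h : (r₁ : ℂ) * A + r₂ * B = s₁ * A + s₂ * B) : r₁ = s₁ ∧ r₂ = s₂ := by
  have hA : A ≠ 0 := by rintro rfl; simp at hBA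
  have h' : ((r₁ - s₁ : ℝ) : ℂ) + (r₂ - s₂ : ℝ) * (B / A) = 0 := by
    field_simp
    push_cast
    linear_combination h
  have hr₂ : r₂ = s₂ := by
    have him : (r₂ - s₂) * (B / A).im = 0 := by simpa using congrArg Complex.im h'
    exact sub_eq_zero.1 ((mul_eq_zero.1 him).resolve_right hBA)
  have hr₁ : r₁ - s₁ = 0 := by simpa [hr₂] using congrArg Complex.re h'
  exact ⟨sub_eq_zero.1 hr₁, hr₂⟩

theorem distToInt_add_intCast_le (t : ℝ) (k : ℤ) : distToInt (t + k) ≤ |t| := by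
  simpa [distToInt] using round_le (t + k) k

theorem abs_sub_lt_of_mem_boxSide {m L j : ℕ} {s t : ℝ} (hs : s ∈ boxSide m L j)
    (ht : t ∈ boxSide m L j) : |s - t| < 1 / ((m : ℝ) ^ 2 * L) :=
  abs_sub_lt_iff.2 ⟨by linarith [hs.2, ht.1], by linarith [hs.1, ht.2]⟩

theorem mul_mem_Ico_of_mem_boxSide {m L j : ℕ} {t : ℝ} (hm : 0 < m) (hL : 0 < L)
    (ht : t ∈ boxSide m L j) : (m * L : ℝ) * t ∈ Ico (j : ℝ) (j + 1 / m) := by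
  have hmL : (0 : ℝ) < m * L := by positivity
  obtain ⟨hlo, hhi⟩ := ht
  constructor
  · calc (j : ℝ) = (m * L) * ((j : ℝ) / (m * L)) := by field_simp
      _ ≤ (m * L) * t := by gcongr
  · calc (m * L : ℝ) * t < (m * L) * ((j : ℝ) / (m * L) + 1 / ((m : ℝ) ^ 2 * L)) := by gcongr
      _ = j + 1 / m := by field_simp

theorem floor_natCast_mul_eq {m j : ℕ} {u : ℝ} (hm : 0 < m) (hu : u ∈ Ico (j : ℝ) (j + 1 / m)) :
    ⌊(m : ℝ) * u⌋ = (m * j : ℕ) := by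
  have hm' : (0 : ℝ) < m := by exact_mod_cast hm
  have hlt : (m : ℝ) * u < m * (j + 1 / m) := by gcongr; exact hu.2
  rw [Int.floor_eq_iff]
  push_cast
  constructor
  · gcongr; exact hu.1
  · rwa [mul_add, mul_one_div_cancel hm'.ne'] at hlt

theorem floor_weighted_sum_eq {a b c m jx jy jz : ℕ} {ux uy uz : ℝ} (hm : 0 < m)
    (habc : a + b + c = m) (hx : ux ∈ Ico (jx : ℝ) (jx + 1 / m))
    (hy : uy ∈ Ico (jy : ℝ) (jy + 1 / m)) (hz : uz ∈ Ico (jz : ℝ) (jz + 1 / m)) :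
    ⌊(a : ℝ) * ux + b * uy + c * uz⌋ = (a * jx + b * jy + c * jz : ℕ) := by
  have hm' : (0 : ℝ) < m := by exact_mod_cast hm
  have habc' : (a : ℝ) + b + c = m := by exact_mod_cast habc
  -- some weights may vanish, so strictness comes from one bound `δ < 1/m` on all fractional parts
  set δ := max (ux - jx) (max (uy - jy) (uz - jz))
  have hδ : (m : ℝ) * δ < 1 := by
    have : δ < 1 / m :=
      max_lt (by linarith [hx.2]) (max_lt (by linarith [hy.2]) (by linarith [hz.2]))
    rwa [lt_div_iff₀ hm', mul_comm] at this
  have hxδ : ux - jx ≤ δ := le_max_left _ _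
  have hyδ : uy - jy ≤ δ := (le_max_left _ _).trans (le_max_right _ _)
  have hzδ : uz - jz ≤ δ := (le_max_right _ _).trans (le_max_right _ _)
  rw [Int.floor_eq_iff]
  push_cast
  constructor
  · nlinarith [hx.1, hy.1, hz.1, a.cast_nonneg (α := ℝ), b.cast_nonneg (α := ℝ),
      c.cast_nonneg (α := ℝ)]
  · nlinarith [mul_le_mul_of_nonneg_left hxδ (a.cast_nonneg (α := ℝ)),
      mul_le_mul_of_nonneg_left hyδ (b.cast_nonneg (α := ℝ)),
      mul_le_mul_of_nonneg_left hzδ (c.cast_nonneg (α := ℝ))]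

theorem weighted_index_eq_of_mem_boxSide {m L a b c jx jy jz jw : ℕ} (hm : 0 < m) (hL : 0 < L)
    (habc : a + b + c = m) (hjx : jx < L) (hjy : jy < L) (hjz : jz < L) (hjw : jw < L)
    {sx sy sz sw : ℝ} (hsx : sx ∈ boxSide m L jx) (hsy : sy ∈ boxSide m L jy)
    (hsz : sz ∈ boxSide m L jz) (hsw : sw ∈ boxSide m L jw) {kx ky kz kw : ℤ}
    (hrel : a * (sx + kx) + b * (sy + ky) + c * (sz + kz) = m * (sw + kw)) :
    a * jx + b * jy + c * jz = m * jw := by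
  have hsum : (a : ℝ) * (m * L * sx) + b * (m * L * sy) + c * (m * L * sz)
      = m * (m * L * sw) + (m * L * (m * kw - a * kx - b * ky - c * kz) : ℤ) := by
    push_cast
    linear_combination (m * L : ℝ) * hrel
  -- the floors of the two sides, scaled by `mL`, are the weighted index sums, which therefore
  -- differ by a multiple of `mL`; both sums are below `mL`
  have hfloor := floor_weighted_sum_eq hm habc (mul_mem_Ico_of_mem_boxSide hm hL hsx)
    (mul_mem_Ico_of_mem_boxSide hm hL hsy) (mul_mem_Ico_of_mem_boxSide hm hL hsz)
  rw [hsum, Int.floor_add_intCast,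
    floor_natCast_mul_eq hm (mul_mem_Ico_of_mem_boxSide hm hL hsw)] at hfloor
  have hmod : a * jx + b * jy + c * jz ≡ m * jw [MOD m * L] :=
    Nat.modEq_iff_dvd.2 ⟨-(m * kw - a * kx - b * ky - c * kz), by
      push_cast at hfloor ⊢
      linear_combination hfloor⟩
  refine hmod.eq_of_lt_of_lt ?_ (Nat.mul_lt_mul_of_pos_left hjw hm)
  calc a * jx + b * jy + c * jz < (a + b + c) * L := by nlinarith
    _ = m * L := by rw [habc]

theorem InBoxMod.sub_near_lattice {A B : ℂ} (hBA : (B / A).im ≠ 0) {m L a b c : ℕ}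
    (hm : 0 < m) (hL : 0 < L) (habc : a + b + c = m) {Λ : Finset ℕ} (hΛL : Λ ⊆ Finset.range L)
    (hΛ : ∀ x ∈ Λ, ∀ y ∈ Λ, ∀ z ∈ Λ, ∀ w ∈ Λ, a * x + b * y + c * z = m * w → x = w)
    {W X Y Z : ℂ} (hW : InBoxMod A B m L Λ W) (hX : InBoxMod A B m L Λ X)
    (hY : InBoxMod A B m L Λ Y) (hZ : InBoxMod A B m L Λ Z)
    (hrel : (a : ℂ) * X + b * Y + c * Z = m * W) :
    ∃ x1 x2 : ℝ, X - W = (x1 : ℂ) * A + (x2 : ℂ) * B ∧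
      max (distToInt x1) (distToInt x2) < 1 / ((m : ℝ) ^ 2 * L) := by
  obtain ⟨jw1, hjw1, jw2, hjw2, kw1, kw2, sw1, sw2, hsw1, hsw2, rfl⟩ := hW
  obtain ⟨jx1, hjx1, jx2, hjx2, kx1, kx2, sx1, sx2, hsx1, hsx2, rfl⟩ := hX
  obtain ⟨jy1, hjy1, jy2, hjy2, ky1, ky2, sy1, sy2, hsy1, hsy2, rfl⟩ := hY
  obtain ⟨jz1, hjz1, jz2, hjz2, kz1, kz2, sz1, sz2, hsz1, hsz2, rfl⟩ := hZ
  have hlt {j : ℕ} (hj : j ∈ Λ) : j < L := Finset.mem_range.1 (hΛL hj)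
  obtain ⟨hrel1, hrel2⟩ := ofReal_mul_add_ofReal_mul_inj hBA
    (r₁ := a * (sx1 + kx1) + b * (sy1 + ky1) + c * (sz1 + kz1)) (s₁ := m * (sw1 + kw1))
    (r₂ := a * (sx2 + kx2) + b * (sy2 + ky2) + c * (sz2 + kz2)) (s₂ := m * (sw2 + kw2))
    (by push_cast; linear_combination hrel)
  have hj1 : jx1 = jw1 := hΛ _ hjx1 _ hjy1 _ hjz1 _ hjw1 <|
    weighted_index_eq_of_mem_boxSide hm hL habc (hlt hjx1) (hlt hjy1) (hlt hjz1) (hlt hjw1)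
      hsx1 hsy1 hsz1 hsw1 hrel1
  have hj2 : jx2 = jw2 := hΛ _ hjx2 _ hjy2 _ hjz2 _ hjw2 <|
    weighted_index_eq_of_mem_boxSide hm hL habc (hlt hjx2) (hlt hjy2) (hlt hjz2) (hlt hjw2)
      hsx2 hsy2 hsz2 hsw2 hrel2
  subst hj1 hj2
  refine ⟨sx1 - sw1 + ((kx1 - kw1 : ℤ) : ℝ), sx2 - sw2 + ((kx2 - kw2 : ℤ) : ℝ),
    by push_cast; ring, max_lt ?_ ?_⟩
  · exact (distToInt_add_intCast_le _ _).trans_lt (abs_sub_lt_of_mem_boxSide hsx1 hsw1)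
  · exact (distToInt_add_intCast_le _ _).trans_lt (abs_sub_lt_of_mem_boxSide hsx2 hsw2)

theorem stmt13_general (m1 m2 m3 m4 : ℕ) (h1 : 0 < m1) (h2 : 0 < m2)
    (m : ℕ) (hm : m = m2 * m3 + m1 * m4 + m1 * m2)
    (A B C : ℂ) (hA : A ≠ 0) (hBA : (B / A).im ≠ 0)
    (e1 : B * C * (B - C) = (m2 : ℂ) * (m3 : ℂ))
    (e2 : C * A * (C - A) = (m1 : ℂ) * (m4 : ℂ))
    (e3 : A * B * (A - B) = (m1 : ℂ) * (m2 : ℂ))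
    (f : ℂ → ℂ → ℂ)
    (hf : ∀ x y : ℂ, f x y = ((m2 : ℂ) * A * x + (m1 : ℂ) * B * y) ^ 2 / A)
    (L : ℕ) (hL : 0 < L) (Λ : Finset ℕ) (hΛL : Λ ⊆ Finset.range L)
    (hΛ : ∀ x ∈ Λ, ∀ y ∈ Λ, ∀ z ∈ Λ, ∀ w ∈ Λ,
      m2 * m3 * x + m1 * m4 * y + m1 * m2 * z = m * w → x = w ∧ y = w ∧ z = w)
    (ψ : ℂ) (n1 n2 d : ℤ)
    (hw : InBoxMod A B m L Λ (ψ * f (n1 : ℂ) (n2 : ℂ)))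
    (hx : InBoxMod A B m L Λ (ψ * f ((n1 : ℂ) + (m1 : ℂ) * (d : ℂ)) (n2 : ℂ)))
    (hy : InBoxMod A B m L Λ (ψ * f (n1 : ℂ) ((n2 : ℂ) + (m2 : ℂ) * (d : ℂ))))
    (hz : InBoxMod A B m L Λ
      (ψ * f ((n1 : ℂ) - (m3 : ℂ) * (d : ℂ)) ((n2 : ℂ) - (m4 : ℂ) * (d : ℂ)))) :
    ∃ x1 x2 : ℝ,
      2 * (m1 : ℂ) * (m2 : ℂ) * ((m2 : ℂ) * A * (n1 : ℂ) + (m1 : ℂ) * B * (n2 : ℂ)) *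
          (d : ℂ) * ψ + (m1 : ℂ) ^ 2 * (m2 : ℂ) ^ 2 * A * (d : ℂ) ^ 2 * ψ
        = (x1 : ℂ) * A + (x2 : ℂ) * B ∧
      max (distToInt x1) (distToInt x2) < 1 / ((m : ℝ) ^ 2 * L) := by
  have hm0 : 0 < m := hm ▸ Nat.add_pos_right _ (Nat.mul_pos h1 h2)
  have hsq := weighted_sum_sq_shifts_eq A B C ((m2 : ℂ) * A * n1 + (m1 : ℂ) * B * n2) d _ _ _
    e1 e2 e3
  have hrel : ((m2 * m3 : ℕ) : ℂ) * (ψ * f (n1 + m1 * d) n2)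
      + ((m1 * m4 : ℕ) : ℂ) * (ψ * f n1 (n2 + m2 * d))
      + ((m1 * m2 : ℕ) : ℂ) * (ψ * f (n1 - m3 * d) (n2 - m4 * d)) = m * (ψ * f n1 n2) := by
    simp only [hf, hm]
    push_cast
    linear_combination (ψ / A) * hsq
  obtain ⟨x1, x2, hXW, hdist⟩ := InBoxMod.sub_near_lattice hBA hm0 hL hm.symm hΛL
    (fun x hx y hy z hz w hw h => (hΛ x hx y hy z hz w hw h).1) hw hx hy hz hrel
  refine ⟨x1, x2, ?_, hdist⟩
  rw [← hXW, hf, hf]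
  field_simp
  ring

theorem stmt13 (m1 m2 m3 m4 : ℕ) (h1 : 0 < m1) (h2 : 0 < m2) (h3 : 0 < m3) (h4 : 0 < m4)
    (m : ℕ) (hm : m = m2 * m3 + m1 * m4 + m1 * m2)
    (A B C : ℂ) (hA : A ≠ 0) (hB : B ≠ 0) (hC : C ≠ 0) (hBA : (B / A).im ≠ 0)
    (e1 : B * C * (B - C) = (m2 : ℂ) * (m3 : ℂ))
    (e2 : C * A * (C - A) = (m1 : ℂ) * (m4 : ℂ))
    (e3 : A * B * (A - B) = (m1 : ℂ) * (m2 : ℂ))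
    (f : ℂ → ℂ → ℂ)
    (hf : ∀ x y : ℂ, f x y = ((m2 : ℂ) * A * x + (m1 : ℂ) * B * y) ^ 2 / A)
    (L : ℕ) (hL : 0 < L) (Λ : Finset ℕ) (hΛL : Λ ⊆ Finset.range L)
    (hΛ : ∀ x ∈ Λ, ∀ y ∈ Λ, ∀ z ∈ Λ, ∀ w ∈ Λ,
      m2 * m3 * x + m1 * m4 * y + m1 * m2 * z = m * w → x = w ∧ y = w ∧ z = w)
    (ψ : ℂ) (n1 n2 d : ℤ)
    (hw : InBoxMod A B m L Λ (ψ * f (n1 : ℂ) (n2 : ℂ)))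
    (hx : InBoxMod A B m L Λ (ψ * f ((n1 : ℂ) + (m1 : ℂ) * (d : ℂ)) (n2 : ℂ)))
    (hy : InBoxMod A B m L Λ (ψ * f (n1 : ℂ) ((n2 : ℂ) + (m2 : ℂ) * (d : ℂ))))
    (hz : InBoxMod A B m L Λ
      (ψ * f ((n1 : ℂ) - (m3 : ℂ) * (d : ℂ)) ((n2 : ℂ) - (m4 : ℂ) * (d : ℂ)))) :
    ∃ x1 x2 : ℝ,
      2 * (m1 : ℂ) * (m2 : ℂ) * ((m2 : ℂ) * A * (n1 : ℂ) + (m1 : ℂ) * B * (n2 : ℂ)) *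
          (d : ℂ) * ψ + (m1 : ℂ) ^ 2 * (m2 : ℂ) ^ 2 * A * (d : ℂ) ^ 2 * ψ
        = (x1 : ℂ) * A + (x2 : ℂ) * B ∧
      max (distToInt x1) (distToInt x2) < 1 / ((m : ℝ) ^ 2 * L) :=
  stmt13_general m1 m2 m3 m4 h1 h2 m hm A B C hA hBA e1 e2 e3 f hf L hL Λ hΛL hΛ ψ n1 n2 d hw hx hy
    hz
end

section
/- For every M there exist a prime p > M and integers a1, a2, a3 ∈ {1, …, p} such that P1(a1,a2,a3) ≡ −1 (mod p), P2(a1,a2,a3) ≡ 3 (mod p), P3(a1,a2,a3) ≡ −1 (mod p), and P4(a1,a2,a3) ≡ −1 (mod p). -/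
/-!
The equations `P2 = 3`, `P3 = -1`, `P4 = -1` have a solution over the sextic field `ℚ(n)`,
`paramPoly n = 0`, given by explicit polynomials in `n` with denominator `36`; since
`P1 + P2 + P3 + P4 = 0`, it also satisfies `P1 = -1`. Reducing modulo a prime `p > 3` at which
`paramPoly` has a root gives a solution in `ZMod p`. Such primes are unbounded by Schur's argument:
if `c = f 0 ≠ 0`, then `f (c t k) = c (1 + t s)` for some `s`, so for `t = N!` every prime factor of
`1 + t s` exceeds `N`.
-/

def P1 (x y z : ℤ) : ℤ := (x - y) * (y - z) * (z - x)
def P2 (x y z : ℤ) : ℤ := y * z * (y - z)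
def P3 (x y z : ℤ) : ℤ := z * x * (z - x)
def P4 (x y z : ℤ) : ℤ := x * y * (x - y)

open Polynomial

theorem Int.exists_prime_gt_dvd_of_factorial_dvd_sub_one {N : ℕ} (hN : 3 ≤ N) {u : ℤ}
    (hu : u ≠ 1) (hNu : (N.factorial : ℤ) ∣ u - 1) : ∃ p : ℕ, p.Prime ∧ N < p ∧ (p : ℤ) ∣ u := by
  have hu' : u.natAbs ≠ 1 := by
    intro h1
    rcases Int.natAbs_eq_iff.mp h1 with h | h
    · exact hu h
    · have h2 : (N.factorial : ℤ) ≤ 2 := Int.le_of_dvd two_pos (by simpa [h] using hNu.neg_right)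
      have : 6 ≤ N.factorial := Nat.factorial_le hN
      omega
  obtain ⟨p, hp, hpu⟩ := Nat.exists_prime_and_dvd hu'
  have hpu : (p : ℤ) ∣ u := Int.natCast_dvd.mpr hpu
  refine ⟨p, hp, ?_, hpu⟩
  by_contra! hpN
  have hpN : (p : ℤ) ∣ N.factorial := Int.natCast_dvd_natCast.mpr (Nat.dvd_factorial hp.pos hpN)
  exact hp.not_dvd_one (Int.natCast_dvd_natCast.mp (by simpa using dvd_sub hpu (hpN.trans hNu)))

theorem Polynomial.exists_eval_mul_ne_eval_zero {R : Type*} [CommRing R] [IsDomain R] [Infinite R]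
    {f : R[X]} (hf : 0 < f.natDegree) {d : R} (hd : d ≠ 0) : ∃ k : R, f.eval (d * k) ≠ f.eval 0 := by
  classical
  have hf0 : f - C (f.eval 0) ≠ 0 := fun h ↦ by
    rw [sub_eq_zero.mp h, natDegree_C] at hf
    exact hf.false
  obtain ⟨_, ⟨k, rfl⟩, hk⟩ := (Set.infinite_range_of_injective (mul_right_injective₀ hd))
    |>.exists_notMem_finset (f - C (f.eval 0)).roots.toFinset
  refine ⟨k, fun h ↦ hk ?_⟩
  rw [Multiset.mem_toFinset, mem_roots hf0, IsRoot.def, eval_sub, eval_C, h, sub_self]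

theorem Polynomial.exists_prime_gt_dvd_eval {f : ℤ[X]} (hf : 0 < f.natDegree) (N : ℕ) :
    ∃ p : ℕ, p.Prime ∧ N < p ∧ ∃ m : ℤ, (p : ℤ) ∣ f.eval m := by
  rcases eq_or_ne (f.eval 0) 0 with hc | hc
  · obtain ⟨p, hNp, hp⟩ := Nat.exists_infinite_primes (N + 1)
    exact ⟨p, hp, hNp, 0, by simp [hc]⟩
  set c := f.eval 0
  set t : ℤ := ((N + 3).factorial : ℤ)
  obtain ⟨k, hk⟩ := exists_eval_mul_ne_eval_zero hf (mul_ne_zero hc (by positivity : t ≠ 0))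
  obtain ⟨s, hs⟩ : c * t * k ∣ f.eval (c * t * k) - c := by
    simpa using sub_dvd_eval_sub (c * t * k) 0 f
  obtain ⟨p, hp, hNp, hpu⟩ := Int.exists_prime_gt_dvd_of_factorial_dvd_sub_one (N := N + 3)
    (by omega) (u := 1 + t * (k * s)) (fun h ↦ hk (by linear_combination hs + c * h))
    ⟨k * s, by ring⟩
  refine ⟨p, hp, by omega, c * t * k, ?_⟩
  rw [show f.eval (c * t * k) = c * (1 + t * (k * s)) by linear_combination hs]
  exact hpu.mul_left c

theorem Polynomial.exists_prime_gt_aeval_eq_zero {f : ℤ[X]} (hf : 0 < f.natDegree) (N : ℕ) :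
    ∃ p : ℕ, p.Prime ∧ N < p ∧ ∃ x : ZMod p, aeval x f = 0 := by
  obtain ⟨p, hp, hNp, m, hm⟩ := exists_prime_gt_dvd_eval hf N
  refine ⟨p, hp, hNp, m, ?_⟩
  rwa [aeval_def, eval₂_eq_eval_map, algebraMap_int_eq, eval_intCast_map, eq_intCast,
    Int.cast_id, ZMod.intCast_zmod_eq_zero_iff_dvd]

noncomputable def paramPoly : ℤ[X] :=
  X ^ 6 - 3 * X ^ 5 + 6 * X ^ 4 - 13 * X ^ 3 + 15 * X ^ 2 + 6 * X + 4

theorem natDegree_paramPoly : paramPoly.natDegree = 6 := by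
  unfold paramPoly
  compute_degree!

theorem exists_P_eq_of_aeval_paramPoly_eq_zero {K : Type*} [Field K] (h6 : (6 : K) ≠ 0) {n : K}
    (hn : aeval n paramPoly = 0) :
    ∃ x y z : K, (x - y) * (y - z) * (z - x) = -1 ∧ y * z * (y - z) = 3 ∧
      z * x * (z - x) = -1 ∧ x * y * (x - y) = -1 := by
  simp only [paramPoly, map_sub, map_add, map_mul, map_pow, aeval_X, map_ofNat] at hn
  set e : K := 36⁻¹
  have he : 36 * e = 1 := mul_inv_cancel₀ (by
    rw [show (36 : K) = 6 * 6 by norm_num]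
    exact mul_ne_zero h6 h6)
  set x := (-3 * n ^ 5 + 10 * n ^ 4 - 20 * n ^ 3 + 39 * n ^ 2 - 62 * n - 8) * e
  set y := (-6 * n ^ 5 + 18 * n ^ 4 - 36 * n ^ 3 + 66 * n ^ 2 - 90 * n - 36) * e
  set z := (-3 * n ^ 5 + 12 * n ^ 4 - 24 * n ^ 3 + 51 * n ^ 2 - 96 * n + 12) * e
  have h2 : y * z * (y - z) = 3 := by
    linear_combination (e ^ 3 * (-29808 + 15552 * n - 756 * n ^ 2 - 6534 * n ^ 3
        + 7668 * n ^ 4 - 5940 * n ^ 5 + 2808 * n ^ 6 - 1080 * n ^ 7 + 324 * n ^ 8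
        - 54 * n ^ 9)) * hn
      + (3 * ((36 * e) ^ 2 + 36 * e + 1)) * he
  have h3 : z * x * (z - x) = -1 := by
    linear_combination (e ^ 3 * (11184 - 15840 * n + 11388 * n ^ 2 - 7038 * n ^ 3
        + 3774 * n ^ 4 - 1410 * n ^ 5 + 426 * n ^ 6 - 114 * n ^ 7 + 18 * n ^ 8)) * hn
      + (-1 * ((36 * e) ^ 2 + 36 * e + 1)) * he
  have h4 : x * y * (x - y) = -1 := by
    linear_combination (e ^ 3 * (13680 + 2160 * n - 10284 * n ^ 2 + 12390 * n ^ 3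
        - 10356 * n ^ 4 + 6708 * n ^ 5 - 3000 * n ^ 6 + 1128 * n ^ 7 - 324 * n ^ 8
        + 54 * n ^ 9)) * hn
      + (-1 * ((36 * e) ^ 2 + 36 * e + 1)) * he
  exact ⟨x, y, z, by linear_combination -h2 - h3 - h4, h2, h3, h4⟩

theorem ZMod.exists_intCast_eq_mem_Icc (p : ℕ) [NeZero p] (x : ZMod p) :
    ∃ a : ℤ, (1 ≤ a ∧ a ≤ p) ∧ (a : ZMod p) = x := by
  refine ⟨(x - 1).val + 1, ⟨by omega, by have := (x - 1).val_lt; omega⟩, ?_⟩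
  push_cast
  rw [ZMod.natCast_zmod_val, sub_add_cancel]

theorem stmt14 (M : ℕ) :
    ∃ p : ℕ, p.Prime ∧ M < p ∧
      ∃ a1 a2 a3 : ℤ,
        (1 ≤ a1 ∧ a1 ≤ (p : ℤ)) ∧ (1 ≤ a2 ∧ a2 ≤ (p : ℤ)) ∧ (1 ≤ a3 ∧ a3 ≤ (p : ℤ)) ∧
        P1 a1 a2 a3 ≡ -1 [ZMOD (p : ℤ)] ∧
        P2 a1 a2 a3 ≡ 3 [ZMOD (p : ℤ)] ∧
        P3 a1 a2 a3 ≡ -1 [ZMOD (p : ℤ)] ∧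
        P4 a1 a2 a3 ≡ -1 [ZMOD (p : ℤ)] := by
  obtain ⟨p, hp, hMp, n, hn⟩ :=
    exists_prime_gt_aeval_eq_zero (by rw [natDegree_paramPoly]; norm_num) (M + 6)
  have := Fact.mk hp
  have h6 : (6 : ZMod p) ≠ 0 := fun h ↦ by
    have := Nat.le_of_dvd (by norm_num) ((ZMod.natCast_eq_zero_iff 6 p).mp (by exact_mod_cast h))
    omega
  obtain ⟨x, y, z, h1, h2, h3, h4⟩ := exists_P_eq_of_aeval_paramPoly_eq_zero h6 hn
  obtain ⟨a1, ha1, rfl⟩ := ZMod.exists_intCast_eq_mem_Icc p x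
  obtain ⟨a2, ha2, rfl⟩ := ZMod.exists_intCast_eq_mem_Icc p y
  obtain ⟨a3, ha3, rfl⟩ := ZMod.exists_intCast_eq_mem_Icc p z
  refine ⟨p, hp, by omega, a1, a2, a3, ha1, ha2, ha3, ?_, ?_, ?_, ?_⟩ <;>
    rw [← ZMod.intCast_eq_intCast_iff] <;> push_cast [P1, P2, P3, P4] <;> assumption
end

section
/- Let p > 3 be a prime and let a1, a2, a3 be integers satisfying P1(a1,a2,a3) ≡ −1, P2(a1,a2,a3) ≡ 3, P3(a1,a2,a3) ≡ −1, and P4(a1,a2,a3) ≡ −1 (mod p). Then there exist reals Θ1 ≥ 1, Θ2 > 0, Θ3 > 0 (depending only on p, a1, a2, a3) such that the following holds. Let L be a positive integer and let Λ ⊆ {0, 1, …, L − 1} be a set such that the only quadruples (w, x, y, z) ∈ Λ⁴ with P1(a1,a2,a3)·w + P2(a1,a2,a3)·x + P3(a1,a2,a3)·y + P4(a1,a2,a3)·z = 0 have w = x = y = z. Let ψ ∈ ℝ, set B = ∪_{j ∈ Λ} [j/(Θ1·L), j/(Θ1·L) + 1/(Θ1²·L)) ⊆ [0,1), and let n, d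 ∈ ℤ. If the fractional parts of ψ·n², ψ·(n + a1·d)², ψ·(n + a2·d)², and ψ·(n + a3·d)² all lie in B, then ‖Θ2·ψ·n·d‖_{ℝ/ℤ} < Θ3/L. -/
/-- The fractional part of `t` lies in
`∪_{j ∈ Λ} [j/(Θ1·L), j/(Θ1·L) + 1/(Θ1²·L))`. -/
def FractInB (Θ1 : ℝ) (L : ℕ) (Λ : Finset ℕ) (t : ℝ) : Prop :=
  ∃ j ∈ Λ, Int.fract t ∈
    Set.Ico ((j : ℝ) / (Θ1 * L)) ((j : ℝ) / (Θ1 * L) + 1 / (Θ1 ^ 2 * L))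

/-! With `t_i = ψ (n + a_i d)²` (`a_0 = 0`) and weights `Q = (P1, P2, P3, P4)(a1, a2, a3)` one has
`∑ Q_i t_i = 0` identically. Take `Θ = 2 ∑ |Q_i|` and write `fract t_i ∈ [j_i/(ΘL), j_i/(ΘL) + 1/(Θ²L))`.
Multiplying `∑ Q_i fract t_i = -∑ Q_i ⌊t_i⌋` by the integer `ΘL` shows that `∑ Q_i j_i` lies within
`1/2` of a multiple of `ΘL`, while `|∑ Q_i j_i| < ΘL`; hence `∑ Q_i j_i = 0`, and the hypothesis on `Λ`
makes all `j_i` equal. So `t_1 - t_0` and `t_2 - t_0` are within `1/(Θ²L)` of integers, and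
`a1² (t_2 - t_0) - a2² (t_1 - t_0) = 2 P4 ψ n d`. -/

theorem distToInt_eq_norm (t : ℝ) : distToInt t = ‖(t : UnitAddCircle)‖ :=
  UnitAddCircle.norm_eq.symm

theorem distToInt_le_abs_sub_intCast (t : ℝ) (m : ℤ) : distToInt t ≤ |t - m| := round_le t m

theorem distToInt_abs_mul (a t : ℝ) : distToInt (|a| * t) = distToInt (a * t) := by
  rcases abs_choice a with h | h
  · rw [h]
  · rw [h, distToInt_eq_norm, distToInt_eq_norm, neg_mul, AddCircle.coe_neg, norm_neg]

theorem distToInt_intCast_mul_sub_le (k l : ℤ) (x y : ℝ) :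
    distToInt (k * x - l * y) ≤ |(k : ℝ)| * distToInt x + |(l : ℝ)| * distToInt y := by
  simp only [distToInt_eq_norm, ← zsmul_eq_mul, AddCircle.coe_sub, AddCircle.coe_zsmul]
  refine (norm_sub_le _ _).trans (add_le_add ?_ ?_) <;>
    exact (norm_zsmul_le _ _).trans_eq (by rw [Int.norm_eq_abs])

theorem distToInt_sub_lt_of_fract_mem_Ico {x y a ε : ℝ} (hx : Int.fract x ∈ Set.Ico a (a + ε))
    (hy : Int.fract y ∈ Set.Ico a (a + ε)) : distToInt (x - y) < ε :=
  calc distToInt (x - y) ≤ |x - y - ((⌊x⌋ - ⌊y⌋ : ℤ) : ℝ)| := distToInt_le_abs_sub_intCast _ _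
    _ = |Int.fract x - Int.fract y| := by rw [Int.fract, Int.fract]; push_cast; ring_nf
    _ < ε := abs_sub_lt_iff.2 ⟨by linarith [hx.2, hy.1], by linarith [hx.1, hy.2]⟩

theorem ne_zero_of_modEq_neg_one {a m : ℤ} (h : a ≡ -1 [ZMOD m]) (hm : 1 < m) : a ≠ 0 := by
  rintro rfl
  have : m ∣ 1 := by simpa using h.symm.dvd
  exact absurd (Int.le_of_dvd one_pos this) hm.not_ge

/-- Up to a common factor, `P1, …, P4` are the weights of the third divided difference at
`0, a1, a2, a3`, which vanishes on quadratics. -/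
theorem sum_P_mul_sq_eq_zero {R : Type*} [CommRing R] (a1 a2 a3 : ℤ) (c n d : R) :
    P1 a1 a2 a3 * (c * n ^ 2) + P2 a1 a2 a3 * (c * (n + a1 * d) ^ 2) +
      P3 a1 a2 a3 * (c * (n + a2 * d) ^ 2) + P4 a1 a2 a3 * (c * (n + a3 * d) ^ 2) = 0 := by
  simp only [P1, P2, P3, P4]; push_cast; ring

theorem distToInt_two_mul_P4_mul_le (a1 a2 a3 : ℤ) (c n d : ℝ) :
    distToInt (2 * P4 a1 a2 a3 * (c * n * d)) ≤
      a1 ^ 2 * distToInt (c * (n + a2 * d) ^ 2 - c * n ^ 2) +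
        a2 ^ 2 * distToInt (c * (n + a1 * d) ^ 2 - c * n ^ 2) := by
  have key : (2 * P4 a1 a2 a3 * (c * n * d) : ℝ) =
      (a1 ^ 2 : ℤ) * (c * (n + a2 * d) ^ 2 - c * n ^ 2) -
        (a2 ^ 2 : ℤ) * (c * (n + a1 * d) ^ 2 - c * n ^ 2) := by
    simp only [P4]; push_cast; ring
  rw [key]
  refine (distToInt_intCast_mul_sub_le _ _ _ _).trans_eq ?_
  push_cast
  rw [abs_of_nonneg (sq_nonneg _), abs_of_nonneg (sq_nonneg _)]

theorem FractInB.sq_mul_pos {Θ : ℝ} {L : ℕ} {Λ : Finset ℕ} {t : ℝ} (h : FractInB Θ L Λ t) :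
    0 < Θ ^ 2 * L := by
  obtain ⟨j, -, hlo, hhi⟩ := h
  exact one_div_pos.1 (by linarith)

theorem sum_mul_eq_zero_of_fract_mem_Ico {ι : Type*} [Fintype ι] {Q j : ι → ℤ} {t : ι → ℝ}
    {N : ℤ} {ε : ℝ} (ht : ∑ i, (Q i : ℝ) * t i = 0)
    (hf : ∀ i, Int.fract (t i) ∈ Set.Ico ((j i : ℝ) / N) (j i / N + ε))
    (hε : (∑ i, |(Q i : ℝ)|) * (N * ε) < 1) (hj : ∑ i, |Q i| * |j i| < N) :
    ∑ i, Q i * j i = 0 := by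
  have hN : (0 : ℝ) < N := by
    exact_mod_cast (Finset.sum_nonneg fun i _ => by positivity).trans_lt hj
  have hdev : ∀ i, |(N : ℝ) * Int.fract (t i) - j i| ≤ N * ε := by
    intro i
    obtain ⟨hlo, hhi⟩ := hf i
    rw [div_le_iff₀ hN] at hlo
    have hhi' := mul_lt_mul_of_pos_left hhi hN
    rw [mul_add, mul_div_cancel₀ _ hN.ne'] at hhi'
    rw [abs_le]
    constructor <;> linarith
  set m := ∑ i, Q i * ⌊t i⌋
  set S := ∑ i, Q i * j i
  have hsplit : ∑ i, (Q i : ℝ) * (N * Int.fract (t i) - j i) =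
      N * ∑ i, (Q i : ℝ) * t i - N * m - S := by
    simp only [m, S, Int.fract]; push_cast
    rw [Finset.mul_sum, Finset.mul_sum, ← Finset.sum_sub_distrib, ← Finset.sum_sub_distrib]
    exact Finset.sum_congr rfl fun i _ => by ring
  have hsmall : |((N * m + S : ℤ) : ℝ)| < 1 :=
    calc |((N * m + S : ℤ) : ℝ)| = |∑ i, (Q i : ℝ) * (N * Int.fract (t i) - j i)| := by
          rw [hsplit, ht, ← abs_neg]; push_cast; ring_nf
      _ ≤ ∑ i, |(Q i : ℝ)| * (N * ε) := (Finset.abs_sum_le_sum_abs _ _).trans <|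
          Finset.sum_le_sum fun i _ => by rw [abs_mul]; gcongr; exact hdev i
      _ < 1 := by rwa [← Finset.sum_mul]
  have hNm : N * m + S = 0 := by
    rw [← Int.abs_lt_one_iff]; exact_mod_cast hsmall
  refine Int.eq_zero_of_abs_lt_dvd (m := N) ⟨-m, by linear_combination hNm⟩ ?_
  calc |S| ≤ ∑ i, |Q i * j i| := Finset.abs_sum_le_sum_abs _ _
    _ = ∑ i, |Q i| * |j i| := by simp only [abs_mul]
    _ < N := hj

theorem distToInt_sub_lt_of_fractInB {ι : Type*} [Fintype ι] {Q : ι → ℤ} {t : ι → ℝ}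
    {L : ℕ} {Λ : Finset ℕ} (hΛ : Λ ⊆ Finset.range L)
    (hsol : ∀ x : ι → ℕ, (∀ i, x i ∈ Λ) → ∑ i, Q i * (x i : ℤ) = 0 → ∀ i k, x i = x k)
    (ht : ∑ i, (Q i : ℝ) * t i = 0)
    (hB : ∀ i, FractInB (2 * ∑ i, |(Q i : ℝ)|) L Λ (t i)) (i k : ι) :
    distToInt (t i - t k) < 1 / ((2 * ∑ i, |(Q i : ℝ)|) ^ 2 * L) := by
  have hpos := (hB i).sq_mul_pos
  have hC : (0 : ℝ) < ∑ i, |(Q i : ℝ)| := by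
    refine (Finset.sum_nonneg fun i _ => abs_nonneg _).lt_of_ne fun h => ?_
    simp [← h] at hpos
  have hL : (0 : ℝ) < L := pos_of_mul_pos_right hpos (by positivity)
  choose j hjΛ hjt using hB
  have hN : ((2 * (∑ i, |Q i|) * L : ℤ) : ℝ) = 2 * (∑ i, |(Q i : ℝ)|) * L := by push_cast; rfl
  have hS : ∑ i, Q i * (j i : ℤ) = 0 := by
    refine sum_mul_eq_zero_of_fract_mem_Ico (N := 2 * (∑ i, |Q i|) * L)
      (ε := 1 / ((2 * ∑ i, |(Q i : ℝ)|) ^ 2 * L)) ht (fun i => ?_) ?_ ?_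
    · rw [hN]; exact_mod_cast hjt i
    · rw [hN]; field_simp; norm_num
    · have hCℤ : (0 : ℤ) < ∑ i, |Q i| := by exact_mod_cast hC
      have hLℤ : (0 : ℤ) < L := by exact_mod_cast hL
      calc ∑ i, |Q i| * |(j i : ℤ)| ≤ ∑ i, |Q i| * L := Finset.sum_le_sum fun i _ => by
            gcongr; exact_mod_cast (Finset.mem_range.1 (hΛ (hjΛ i))).le
        _ = (∑ i, |Q i|) * L := (Finset.sum_mul ..).symm
        _ < 2 * (∑ i, |Q i|) * L := by nlinarith
  exact distToInt_sub_lt_of_fract_mem_Ico (hjt i) (hsol j hjΛ hS k i ▸ hjt k)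

theorem forall_eq_of_sum_fin_four_eq_zero {Q : Fin 4 → ℤ} {Λ : Finset ℕ}
    (h : ∀ w ∈ Λ, ∀ x ∈ Λ, ∀ y ∈ Λ, ∀ z ∈ Λ,
      Q 0 * (w : ℤ) + Q 1 * (x : ℤ) + Q 2 * (y : ℤ) + Q 3 * (z : ℤ) = 0 → w = x ∧ x = y ∧ y = z)
    (x : Fin 4 → ℕ) (hx : ∀ i, x i ∈ Λ) (hS : ∑ i, Q i * (x i : ℤ) = 0) (i k : Fin 4) :
    x i = x k := by
  obtain ⟨h01, h12, h23⟩ :=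
    h _ (hx 0) _ (hx 1) _ (hx 2) _ (hx 3) (by simpa [Fin.sum_univ_four] using hS)
  fin_cases i <;> fin_cases k <;> simp <;> omega

theorem stmt16_general (p : ℕ) (hp : p.Prime) (a1 a2 a3 : ℤ)
    (h4 : P4 a1 a2 a3 ≡ -1 [ZMOD (p : ℤ)]) :
    ∃ Θ1 Θ2 Θ3 : ℝ, 1 ≤ Θ1 ∧ 0 < Θ2 ∧ 0 < Θ3 ∧
      ∀ L : ℕ, 0 < L →
        ∀ Λ : Finset ℕ, Λ ⊆ Finset.range L →
          (∀ w ∈ Λ, ∀ x ∈ Λ, ∀ y ∈ Λ, ∀ z ∈ Λ,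
            P1 a1 a2 a3 * (w : ℤ) + P2 a1 a2 a3 * (x : ℤ) +
              P3 a1 a2 a3 * (y : ℤ) + P4 a1 a2 a3 * (z : ℤ) = 0 →
            w = x ∧ x = y ∧ y = z) →
          ∀ ψ : ℝ, ∀ n d : ℤ,
            FractInB Θ1 L Λ (ψ * (n : ℝ) ^ 2) →
            FractInB Θ1 L Λ (ψ * ((n : ℝ) + (a1 : ℝ) * (d : ℝ)) ^ 2) →
            FractInB Θ1 L Λ (ψ * ((n : ℝ) + (a2 : ℝ) * (d : ℝ)) ^ 2) →
            FractInB Θ1 L Λ (ψ * ((n : ℝ) + (a3 : ℝ) * (d : ℝ)) ^ 2) →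
            distToInt (Θ2 * ψ * (n : ℝ) * (d : ℝ)) < Θ3 / L := by
  set Q : Fin 4 → ℤ := ![P1 a1 a2 a3, P2 a1 a2 a3, P3 a1 a2 a3, P4 a1 a2 a3]
  set Θ1 := 2 * ∑ i, |(Q i : ℝ)|
  have hP4 : P4 a1 a2 a3 ≠ 0 := ne_zero_of_modEq_neg_one h4 (by exact_mod_cast hp.one_lt)
  have ha1 : (a1 : ℝ) ≠ 0 := by rintro h; simp_all [P4]
  have hΘ1 : 1 ≤ Θ1 := by
    have h1 : (1 : ℝ) ≤ |(Q 3 : ℝ)| := by exact_mod_cast Int.one_le_abs hP4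
    linarith [Finset.single_le_sum (fun i _ => abs_nonneg (Q i : ℝ)) (Finset.mem_univ 3)]
  refine ⟨Θ1, |(2 * P4 a1 a2 a3 : ℝ)|, (a1 ^ 2 + a2 ^ 2) / Θ1 ^ 2, hΘ1,
    abs_pos.2 (by exact_mod_cast mul_ne_zero two_ne_zero hP4), by positivity, ?_⟩
  intro L _ Λ hΛ hsol ψ n d hB0 hB1 hB2 hB3
  set t : Fin 4 → ℝ := ![ψ * (n : ℝ) ^ 2, ψ * ((n : ℝ) + (a1 : ℝ) * (d : ℝ)) ^ 2,
    ψ * ((n : ℝ) + (a2 : ℝ) * (d : ℝ)) ^ 2, ψ * ((n : ℝ) + (a3 : ℝ) * (d : ℝ)) ^ 2]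
  have ht : ∑ i, (Q i : ℝ) * t i = 0 := by
    simpa [Q, t, Fin.sum_univ_four] using sum_P_mul_sq_eq_zero a1 a2 a3 ψ (n : ℝ) d
  have hB : ∀ i, FractInB Θ1 L Λ (t i) := by intro i; fin_cases i <;> assumption
  have hclose := distToInt_sub_lt_of_fractInB hΛ (forall_eq_of_sum_fin_four_eq_zero hsol) ht hB
  calc distToInt (|(2 * P4 a1 a2 a3 : ℝ)| * ψ * n * d)
      = distToInt (2 * P4 a1 a2 a3 * (ψ * n * d)) := by
        rw [mul_assoc, mul_assoc, ← mul_assoc ψ, distToInt_abs_mul]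
    _ ≤ a1 ^ 2 * distToInt (t 2 - t 0) + a2 ^ 2 * distToInt (t 1 - t 0) :=
        distToInt_two_mul_P4_mul_le a1 a2 a3 ψ n d
    _ < a1 ^ 2 * (1 / (Θ1 ^ 2 * L)) + a2 ^ 2 * (1 / (Θ1 ^ 2 * L)) :=
        add_lt_add_of_lt_of_le (mul_lt_mul_of_pos_left (hclose 2 0) (by positivity))
          (mul_le_mul_of_nonneg_left (hclose 1 0).le (sq_nonneg _))
    _ = (a1 ^ 2 + a2 ^ 2) / Θ1 ^ 2 / L := by ring

theorem stmt16 (p : ℕ) (hp : p.Prime) (hp3 : 3 < p) (a1 a2 a3 : ℤ)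
    (h1 : P1 a1 a2 a3 ≡ -1 [ZMOD (p : ℤ)])
    (h2 : P2 a1 a2 a3 ≡ 3 [ZMOD (p : ℤ)])
    (h3 : P3 a1 a2 a3 ≡ -1 [ZMOD (p : ℤ)])
    (h4 : P4 a1 a2 a3 ≡ -1 [ZMOD (p : ℤ)]) :
    ∃ Θ1 Θ2 Θ3 : ℝ, 1 ≤ Θ1 ∧ 0 < Θ2 ∧ 0 < Θ3 ∧
      ∀ L : ℕ, 0 < L →
        ∀ Λ : Finset ℕ, Λ ⊆ Finset.range L →
          (∀ w ∈ Λ, ∀ x ∈ Λ, ∀ y ∈ Λ, ∀ z ∈ Λ,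
            P1 a1 a2 a3 * (w : ℤ) + P2 a1 a2 a3 * (x : ℤ) +
              P3 a1 a2 a3 * (y : ℤ) + P4 a1 a2 a3 * (z : ℤ) = 0 →
            w = x ∧ x = y ∧ y = z) →
          ∀ ψ : ℝ, ∀ n d : ℤ,
            FractInB Θ1 L Λ (ψ * (n : ℝ) ^ 2) →
            FractInB Θ1 L Λ (ψ * ((n : ℝ) + (a1 : ℝ) * (d : ℝ)) ^ 2) →
            FractInB Θ1 L Λ (ψ * ((n : ℝ) + (a2 : ℝ) * (d : ℝ)) ^ 2) →
            FractInB Θ1 L Λ (ψ * ((n : ℝ) + (a3 : ℝ) * (d : ℝ)) ^ 2) →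
            distToInt (Θ2 * ψ * (n : ℝ) * (d : ℝ)) < Θ3 / L :=
  stmt16_general p hp a1 a2 a3 h4
end

section
/- There exists a constant c > 0 such that for all 0 < α < 1/2 there exists N0 such that for every prime N > N0 there exists a function f : ℤ/Nℤ → [0,1] with (1/N)·Σ_{t ∈ ℤ/Nℤ} f(t) ≥ α such that for every nonzero d ∈ ℤ/Nℤ: (1/N)·Σ_{t ∈ ℤ/Nℤ} f(t)·f(t + d)·f(t + 2d)·f(t + 5d) < (1 − c)·α^4. -/
/-!
Let `ψ` be a primitive additive character of a finite field of size `N` and put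
`F x = (1 + θ) + ∑ ± ψ (m x²) / 9` over `m ∈ ±{1, 6, 10, 15}`, with sign `-` exactly at `±15`.
The coefficients are even in `m`, so `F` is real, and `|F - (1 + θ)| ≤ 8/9`; take `f = α F`.
Expanding `∑ₜ F t F (t + d) F (t + 2d) F (t + 5d)` gives, for every `p` in `{0, ±1, …, ±15}⁴`,
the Gauss-type sum `∑ₜ ψ (∑ᵢ pᵢ (t + sᵢ d)²)` with `s = (0, 1, 2, 5)`. It has size `√N` unless
`∑ pᵢ = ∑ pᵢ sᵢ = 0`, and the only such `p` are `0` and `±(6, -15, 10, -1)`, for which the phase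
vanishes identically. The latter two carry the negative weight `-1/9⁴`, so the count is
`N ((1 + θ)⁴ - 2/9⁴) + O(√N)`, while the mean of `F` is `1 + θ + O(1/√N)`. With `θ = 1/40000` and
`N ≥ 10¹²` the mean is at least `1` and the count is below `(1 - 1/9⁴) N`.
-/

open Finset

namespace AddChar

lemma map_sum_eq_prod {A M ι : Type*} [AddCommMonoid A] [CommMonoid M] (ψ : AddChar A M)
    (s : Finset ι) (f : ι → A) : ψ (∑ i ∈ s, f i) = ∏ i ∈ s, ψ (f i) :=
  map_prod ψ.toMonoidHom (fun i ↦ Multiplicative.ofAdd (f i)) s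

variable {F : Type*} [Field F] [Fintype F] {ψ : AddChar F ℂ}

lemma sum_apply_mul_add_eq_zero (hψ : ψ.IsPrimitive) {l : F} (hl : l ≠ 0) (r : F) :
    ∑ t, ψ (l * t + r) = 0 := by
  classical
  simp_rw [map_add_eq_mul, ← sum_mul, mul_comm l]
  rw [sum_mulShift l hψ, if_neg hl, Nat.cast_zero, zero_mul]

lemma norm_sum_apply_quadratic (hψ : ψ.IsPrimitive) (h2 : (2 : F) ≠ 0) {q : F} (hq : q ≠ 0)
    (l r : F) : ‖∑ t, ψ (q * t ^ 2 + l * t + r)‖ = √(Fintype.card F) := by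
  set Q : F → F := fun t ↦ q * t ^ 2 + l * t + r
  -- substituting `t = s + u`, the difference `Q (s + u) - Q s` is linear in `s`
  have hsq : ‖∑ t, ψ (Q t)‖ ^ 2 = Fintype.card F := by
    rw [← Complex.ofReal_inj, Complex.ofReal_pow, ← Complex.mul_conj', map_sum, sum_mul_sum]
    calc ∑ t, ∑ s, ψ (Q t) * (starRingEnd ℂ) (ψ (Q s))
        = ∑ s, ∑ u, ψ (2 * q * u * s + (q * u ^ 2 + l * u)) := by
          rw [sum_comm]
          refine sum_congr rfl fun s _ ↦ ?_
          rw [← Equiv.sum_comp (Equiv.addLeft s)]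
          refine sum_congr rfl fun u _ ↦ ?_
          rw [← map_neg_eq_conj, ← map_add_eq_mul]
          congr 1
          simp only [Q, Equiv.coe_addLeft]
          ring
      _ = ∑ u, ∑ s, ψ (2 * q * u * s + (q * u ^ 2 + l * u)) := sum_comm
      _ = Fintype.card F := by
          rw [sum_eq_single 0 (fun u _ hu ↦ sum_apply_mul_add_eq_zero hψ
            (mul_ne_zero (mul_ne_zero h2 hq) hu) _) (by simp)]
          simp
  rw [← hsq, Real.sqrt_sq (norm_nonneg _)]

end AddChar

lemma sum_mul_add_mul_sq {R : Type*} [CommRing R] {k : ℕ} (p s : Fin k → ℤ) (t d : R) :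
    ∑ i, (p i : R) * (t + s i * d) ^ 2
      = ((∑ i, p i : ℤ) : R) * t ^ 2 + 2 * ((∑ i, p i * s i : ℤ) : R) * d * t
        + ((∑ i, p i * s i ^ 2 : ℤ) : R) * d ^ 2 := by
  simp only [Int.cast_sum, Int.cast_mul, Int.cast_pow, sum_mul, mul_sum, ← sum_add_distrib]
  exact sum_congr rfl fun i _ ↦ by ring

lemma intCast_ne_zero_of_abs_lt_ringChar {R : Type*} [Ring R] {z : ℤ} (hz : z ≠ 0)
    (h : |z| < ringChar R) : (z : R) ≠ 0 :=
  fun h0 ↦ hz (Int.eq_zero_of_abs_lt_dvd ((CharP.intCast_eq_zero_iff R _ z).1 h0) h)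

section QuadraticPhases

variable {F : Type*} [Field F] [Fintype F] (ψ : AddChar F ℂ) {k : ℕ}

noncomputable def phaseSum (s : Fin k → ℤ) (d : F) (p : Fin k → ℤ) : ℂ :=
  ∑ t, ψ (∑ i, (p i : F) * (t + s i * d) ^ 2)

lemma sum_prod_eq_sum_mul_phaseSum (M : Finset ℤ) (a : ℤ → ℂ) (s : Fin k → ℤ) (d : F) :
    ∑ t, ∏ i, ∑ m ∈ M, a m * ψ (m * (t + s i * d) ^ 2)
      = ∑ p ∈ Fintype.piFinset fun _ ↦ M, (∏ i, a (p i)) * phaseSum ψ s d p := by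
  simp_rw [prod_univ_sum, phaseSum, mul_sum, AddChar.map_sum_eq_prod, ← prod_mul_distrib]
  exact sum_comm

variable {ψ}

lemma phaseSum_eq_card {s p : Fin k → ℤ} (d : F) (hA : ∑ i, p i = 0) (hB : ∑ i, p i * s i = 0)
    (hC : ∑ i, p i * s i ^ 2 = 0) : phaseSum ψ s d p = Fintype.card F := by
  simp [phaseSum, sum_mul_add_mul_sq, hA, hB, hC]

lemma norm_phaseSum_le (hψ : ψ.IsPrimitive) (h2 : (2 : F) ≠ 0) {d : F} (hd : d ≠ 0)
    {s p : Fin k → ℤ} (hp : ((∑ i, p i : ℤ) : F) ≠ 0 ∨ ((∑ i, p i * s i : ℤ) : F) ≠ 0) :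
    ‖phaseSum ψ s d p‖ ≤ √(Fintype.card F) := by
  simp only [phaseSum, sum_mul_add_mul_sq]
  by_cases hA : ((∑ i, p i : ℤ) : F) = 0
  · have hB := hp.resolve_left (not_not.2 hA)
    simp only [hA, zero_mul, zero_add]
    rw [AddChar.sum_apply_mul_add_eq_zero hψ (mul_ne_zero (mul_ne_zero h2 hB) hd), norm_zero]
    positivity
  · exact (AddChar.norm_sum_apply_quadratic hψ h2 hA _ _).le

end QuadraticPhases

def freqs : Finset ℤ := {0, 1, -1, 6, -6, 10, -10, 15, -15}

noncomputable def weight (θ : ℝ) (m : ℤ) : ℝ :=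
  if m = 0 then 1 + θ else if m = 15 ∨ m = -15 then -(1 / 9) else 1 / 9

def shifts : Fin 4 → ℤ := ![0, 1, 2, 5]

def resonant : Finset (Fin 4 → ℤ) := {0, ![6, -15, 10, -1], ![-6, 15, -10, 1]}

lemma neg_mem_freqs : ∀ m ∈ freqs, -m ∈ freqs := by decide

lemma abs_le_of_mem_freqs : ∀ m ∈ freqs, |m| ≤ 15 := by decide

lemma weight_neg (θ : ℝ) (m : ℤ) : weight θ (-m) = weight θ m := by
  unfold weight
  split_ifs <;> first | rfl | omega

lemma abs_weight_of_ne_zero (θ : ℝ) {m : ℤ} (hm : m ≠ 0) : |weight θ m| = 1 / 9 := by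
  unfold weight
  split_ifs <;> first | contradiction | norm_num

lemma mem_resonant_of_sum_eq_zero {p : Fin 4 → ℤ} (hp : ∀ i, p i ∈ freqs)
    (hA : ∑ i, p i = 0) (hB : ∑ i, p i * shifts i = 0) : p ∈ resonant := by
  simp only [Fin.sum_univ_four, shifts, Matrix.cons_val_zero, Matrix.cons_val_one, Matrix.cons_val,
    mul_zero, mul_one, zero_add] at hA hB
  have h0 : p 0 = p 2 + 4 * p 3 := by omega
  have h1 : p 1 = -(2 * p 2) - 5 * p 3 := by omega
  -- the two relations fix `p 0` and `p 1`, leaving a finite search over `p 2` and `p 3`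
  have key : ∀ c ∈ freqs, ∀ e ∈ freqs, c + 4 * e ∈ freqs → -(2 * c) - 5 * e ∈ freqs →
      (c = 0 ∧ e = 0) ∨ (c = 10 ∧ e = -1) ∨ (c = -10 ∧ e = 1) := by decide
  have hp' : p = ![p 2 + 4 * p 3, -(2 * p 2) - 5 * p 3, p 2, p 3] := by
    ext i; fin_cases i <;> simp [h0, h1]
  rcases key _ (hp 2) _ (hp 3) (h0 ▸ hp 0) (h1 ▸ hp 1) with ⟨h2, h3⟩ | ⟨h2, h3⟩ | ⟨h2, h3⟩ <;>
    rw [hp', h2, h3] <;> decide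

lemma forall_mem_freqs_of_mem_resonant : ∀ p ∈ resonant, ∀ i, p i ∈ freqs := by decide

lemma sums_eq_zero_of_mem_resonant : ∀ p ∈ resonant,
    ∑ i, p i = 0 ∧ ∑ i, p i * shifts i = 0 ∧ ∑ i, p i * shifts i ^ 2 = 0 := by
  decide

lemma sum_resonant_prod_weight (θ : ℝ) :
    ∑ p ∈ resonant, ∏ i, (weight θ (p i) : ℂ) = ((1 + θ) ^ 4 - 2 / 9 ^ 4 : ℝ) := by
  rw [resonant, sum_insert (by decide), sum_insert (by decide), sum_singleton]
  simp only [Fin.prod_univ_four, Matrix.cons_val_zero, Matrix.cons_val_one, Matrix.cons_val,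
    Pi.zero_apply]
  norm_num [weight]
  ring

lemma sum_abs_weight (θ : ℝ) : ∑ m ∈ freqs, |weight θ m| = |1 + θ| + 8 / 9 := by
  norm_num [freqs, weight]

section Profile

variable {F : Type*} [Field F] [Fintype F] (ψ : AddChar F ℂ)

noncomputable def profile (θ : ℝ) (x : F) : ℂ :=
  ∑ m ∈ freqs, (weight θ m : ℂ) * ψ (m * x ^ 2)

lemma norm_sum_weight_mul_sub_le (θ : ℝ) (g : ℤ → ℂ) {B : ℝ}
    (hg : ∀ m ∈ freqs, m ≠ 0 → ‖g m‖ ≤ B) :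
    ‖∑ m ∈ freqs, (weight θ m : ℂ) * g m - (1 + θ : ℝ) * g 0‖ ≤ 8 / 9 * B := by
  have h0 : (0 : ℤ) ∈ freqs := by decide
  rw [← add_sum_erase _ _ h0, weight, if_pos rfl, add_sub_cancel_left]
  calc ‖∑ m ∈ freqs.erase 0, (weight θ m : ℂ) * g m‖
      ≤ ∑ m ∈ freqs.erase 0, ‖(weight θ m : ℂ) * g m‖ := norm_sum_le _ _
    _ ≤ ∑ _m ∈ freqs.erase 0, 1 / 9 * B := by
        refine sum_le_sum fun m hm ↦ ?_
        obtain ⟨hm0, hm⟩ := mem_erase.1 hm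
        rw [norm_mul, Complex.norm_real, Real.norm_eq_abs, abs_weight_of_ne_zero θ hm0]
        gcongr
        exact hg m hm hm0
    _ = 8 / 9 * B := by
        rw [sum_const, card_erase_of_mem h0, nsmul_eq_mul]
        rw [show freqs.card - 1 = 8 from rfl]
        ring

lemma conj_profile (θ : ℝ) (x : F) : (starRingEnd ℂ) (profile ψ θ x) = profile ψ θ x := by
  rw [profile, map_sum]
  refine sum_nbij' Neg.neg Neg.neg neg_mem_freqs neg_mem_freqs (fun m _ ↦ neg_neg m)
    (fun m _ ↦ neg_neg m) fun m _ ↦ ?_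
  rw [map_mul, Complex.conj_ofReal, ← AddChar.map_neg_eq_conj, weight_neg, Int.cast_neg, neg_mul]

lemma ofReal_re_profile (θ : ℝ) (x : F) : ((profile ψ θ x).re : ℂ) = profile ψ θ x :=
  Complex.conj_eq_iff_re.1 (conj_profile ψ θ x)

lemma abs_re_profile_sub_le (θ : ℝ) (x : F) : |(profile ψ θ x).re - (1 + θ)| ≤ 8 / 9 := by
  have h := norm_sum_weight_mul_sub_le θ (fun m ↦ ψ (m * x ^ 2)) (B := 1)
    fun m _ _ ↦ (AddChar.norm_apply ψ _).le
  simp only [Int.cast_zero, zero_mul, AddChar.map_zero_eq_one, mul_one] at h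
  rw [← profile] at h
  simpa using (Complex.abs_re_le_norm _).trans h

variable {ψ}

lemma norm_sum_profile_sub_le (hψ : ψ.IsPrimitive) (hF : 15 < ringChar F) (θ : ℝ) :
    ‖∑ x, profile ψ θ x - Fintype.card F * (1 + θ : ℝ)‖ ≤ 8 / 9 * √(Fintype.card F) := by
  have h2 : (2 : F) ≠ 0 := by
    exact_mod_cast intCast_ne_zero_of_abs_lt_ringChar (R := F) (z := 2) (by norm_num)
      (by norm_num; omega)
  have h := norm_sum_weight_mul_sub_le θ (fun m ↦ ∑ x : F, ψ (m * x ^ 2)) (B := √(Fintype.card F))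
    fun m hm hm0 ↦ by
      have hmF : (m : F) ≠ 0 := intCast_ne_zero_of_abs_lt_ringChar hm0
        ((abs_le_of_mem_freqs m hm).trans_lt (by exact_mod_cast hF))
      simpa using (AddChar.norm_sum_apply_quadratic hψ h2 hmF 0 0).le
  simp only [Int.cast_zero, zero_mul, AddChar.map_zero_eq_one, sum_const, card_univ,
    nsmul_eq_mul, mul_one] at h
  have hsum : ∑ x, profile ψ θ x = ∑ m ∈ freqs, (weight θ m : ℂ) * ∑ x : F, ψ (m * x ^ 2) := by
    simp only [profile, mul_sum]
    exact sum_comm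
  rwa [hsum, mul_comm (Fintype.card F : ℂ)]

lemma abs_sums_le_of_abs_le {p : Fin 4 → ℤ} (hp : ∀ i, |p i| ≤ 15) :
    |∑ i, p i| ≤ 120 ∧ |∑ i, p i * shifts i| ≤ 120 := by
  have := hp 0; have := hp 1; have := hp 2; have := hp 3
  simp only [Fin.sum_univ_four, shifts, Matrix.cons_val_zero, Matrix.cons_val_one, Matrix.cons_val,
    mul_zero, mul_one, zero_add, abs_le] at *
  omega

lemma norm_phaseSum_le_of_notMem_resonant (hψ : ψ.IsPrimitive) (hF : 120 < ringChar F) {d : F}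
    (hd : d ≠ 0) {p : Fin 4 → ℤ} (hp : ∀ i, p i ∈ freqs) (hres : p ∉ resonant) :
    ‖phaseSum ψ shifts d p‖ ≤ √(Fintype.card F) := by
  have hcast : ∀ z : ℤ, |z| ≤ 120 → (z : F) = 0 → z = 0 := fun z hz ↦ not_imp_not.1
    fun hz0 ↦ intCast_ne_zero_of_abs_lt_ringChar hz0 (hz.trans_lt (by exact_mod_cast hF))
  have h2 : (2 : F) ≠ 0 := by exact_mod_cast mt (hcast 2 (by norm_num)) (by norm_num)
  obtain ⟨hA, hB⟩ := abs_sums_le_of_abs_le fun i ↦ abs_le_of_mem_freqs _ (hp i)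
  refine norm_phaseSum_le hψ h2 hd (not_and_or.1 fun h ↦ hres ?_)
  exact mem_resonant_of_sum_eq_zero hp (hcast _ hA h.1) (hcast _ hB h.2)

lemma norm_sum_prod_profile_sub_le (hψ : ψ.IsPrimitive) (hF : 120 < ringChar F) {d : F}
    (hd : d ≠ 0) (θ : ℝ) :
    ‖∑ t, ∏ i, profile ψ θ (t + shifts i * d) - Fintype.card F * ((1 + θ) ^ 4 - 2 / 9 ^ 4 : ℝ)‖
      ≤ (|1 + θ| + 8 / 9) ^ 4 * √(Fintype.card F) := by
  set M := Fintype.piFinset fun _ : Fin 4 ↦ freqs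
  have hsub : resonant ⊆ M := fun p hp ↦
    Fintype.mem_piFinset.2 (forall_mem_freqs_of_mem_resonant p hp)
  have hres : ∑ p ∈ resonant, (∏ i, (weight θ (p i) : ℂ)) * phaseSum ψ shifts d p
      = Fintype.card F * ((1 + θ) ^ 4 - 2 / 9 ^ 4 : ℝ) := by
    rw [← sum_resonant_prod_weight, mul_comm, sum_mul]
    refine sum_congr rfl fun p hp ↦ ?_
    obtain ⟨hA, hB, hC⟩ := sums_eq_zero_of_mem_resonant p hp
    rw [phaseSum_eq_card d hA hB hC, mul_comm]
  simp only [profile]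
  rw [sum_prod_eq_sum_mul_phaseSum, ← sum_sdiff hsub, hres, add_sub_cancel_right]
  calc ‖∑ p ∈ M \ resonant, (∏ i, (weight θ (p i) : ℂ)) * phaseSum ψ shifts d p‖
      ≤ ∑ p ∈ M \ resonant, (∏ i, |weight θ (p i)|) * √(Fintype.card F) := by
        refine (norm_sum_le _ _).trans (sum_le_sum fun p hp ↦ ?_)
        obtain ⟨hpM, hpres⟩ := mem_sdiff.1 hp
        rw [norm_mul, norm_prod]
        simp only [Complex.norm_real, Real.norm_eq_abs]
        gcongr
        exact norm_phaseSum_le_of_notMem_resonant hψ hF hd (Fintype.mem_piFinset.1 hpM) hpres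
    _ ≤ ∑ p ∈ M, (∏ i, |weight θ (p i)|) * √(Fintype.card F) :=
        sum_le_sum_of_subset_of_nonneg sdiff_subset fun _ _ _ ↦ by positivity
    _ = (|1 + θ| + 8 / 9) ^ 4 * √(Fintype.card F) := by
        rw [← sum_mul, sum_prod_piFinset freqs fun _ m ↦ |weight θ m|, Fin.prod_const,
          sum_abs_weight]

variable (ψ) in
lemma re_prod_profile {k : ℕ} (θ : ℝ) (x : Fin k → F) :
    (∏ i, profile ψ θ (x i)).re = ∏ i, (profile ψ θ (x i)).re := by
  conv_lhs => rw [← Finset.prod_congr rfl fun i _ ↦ ofReal_re_profile ψ θ (x i)]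
  rw [← Complex.ofReal_prod, Complex.ofReal_re]

theorem exists_dense_function_few_configurations (hψ : ψ.IsPrimitive) (hF : 120 < ringChar F)
    (hN : 10 ^ 12 ≤ Fintype.card F) {α : ℝ} (hα0 : 0 < α) (hα : α ≤ 1 / 2) :
    ∃ f : F → ℝ, (∀ t, 0 ≤ f t ∧ f t ≤ 1) ∧ α * Fintype.card F ≤ ∑ t, f t ∧
      ∀ d ≠ 0, ∑ t, f t * f (t + d) * f (t + 2 * d) * f (t + 5 * d)
        < (1 - 1 / 9 ^ 4) * α ^ 4 * Fintype.card F := by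
  set θ : ℝ := 1 / 40000
  have hs : 10 ^ 6 ≤ √(Fintype.card F : ℝ) :=
    Real.le_sqrt_of_sq_le (by norm_num; exact_mod_cast hN)
  have hNs : (Fintype.card F : ℝ) = √(Fintype.card F : ℝ) ^ 2 :=
    (Real.sq_sqrt (Nat.cast_nonneg _)).symm
  refine ⟨fun x ↦ α * (profile ψ θ x).re, fun t ↦ ?_, ?_, fun d hd ↦ ?_⟩
  · have h := abs_le.1 (abs_re_profile_sub_le ψ θ t)
    constructor <;> nlinarith
  · have h := (Complex.abs_re_le_norm _).trans (norm_sum_profile_sub_le hψ (by omega) θ)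
    rw [Complex.sub_re, ← Complex.ofReal_natCast, ← Complex.ofReal_mul, Complex.ofReal_re,
      abs_le] at h
    rw [← mul_sum, ← Complex.re_sum]
    refine mul_le_mul_of_nonneg_left ?_ hα0.le
    nlinarith
  · have h := (Complex.re_le_norm _).trans (norm_sum_prod_profile_sub_le hψ hF hd θ)
    rw [Complex.sub_re, ← Complex.ofReal_natCast, ← Complex.ofReal_mul, Complex.ofReal_re,
      Complex.re_sum] at h
    simp only [re_prod_profile] at h
    simp only [Fin.prod_univ_four, shifts, Matrix.cons_val_zero, Matrix.cons_val_one,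
      Matrix.cons_val, Int.cast_zero, Int.cast_one, Int.cast_ofNat, zero_mul, add_zero, one_mul,
      abs_of_pos (show 0 < 1 + θ by norm_num)] at h
    set S := ∑ t, (profile ψ θ t).re * (profile ψ θ (t + d)).re *
      (profile ψ θ (t + 2 * d)).re * (profile ψ θ (t + 5 * d)).re
    have hS : S < (1 - 1 / 9 ^ 4) * Fintype.card F := by nlinarith
    calc ∑ t, α * (profile ψ θ t).re * (α * (profile ψ θ (t + d)).re) *
          (α * (profile ψ θ (t + 2 * d)).re) * (α * (profile ψ θ (t + 5 * d)).re)
        = α ^ 4 * S := by rw [mul_sum]; exact sum_congr rfl fun t _ ↦ by ring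
      _ < α ^ 4 * ((1 - 1 / 9 ^ 4) * Fintype.card F) := by gcongr
      _ = (1 - 1 / 9 ^ 4) * α ^ 4 * Fintype.card F := by ring

end Profile

lemma ZMod.sum_range_natCast {M : Type*} [AddCommMonoid M] (N : ℕ) [NeZero N] (g : ZMod N → M) :
    ∑ i ∈ range N, g i = ∑ x, g x :=
  sum_nbij' (fun i ↦ i) ZMod.val (fun _ _ ↦ mem_univ _) (fun x _ ↦ mem_range.2 x.val_lt)
    (fun _ hi ↦ ZMod.val_natCast_of_lt (mem_range.1 hi)) (fun x _ ↦ ZMod.natCast_zmod_val x)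
    fun _ _ ↦ rfl

theorem stmt18 :
    ∃ c : ℝ, 0 < c ∧
      ∀ α : ℝ, 0 < α → α < 1/2 →
        ∃ N0 : ℕ, ∀ N : ℕ, N.Prime → N0 < N →
          ∃ f : ZMod N → ℝ,
            (∀ t : ZMod N, 0 ≤ f t ∧ f t ≤ 1) ∧
            α ≤ (1 / (N : ℝ)) * ∑ t ∈ Finset.range N, f (t : ZMod N) ∧
            ∀ d : ZMod N, d ≠ 0 →
              (1 / (N : ℝ)) * ∑ t ∈ Finset.range N,
                  f (t : ZMod N) * f ((t : ZMod N) + d) * f ((t : ZMod N) + 2 * d) *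
                    f ((t : ZMod N) + 5 * d) <
                (1 - c) * α ^ 4 := by
  refine ⟨1 / 9 ^ 4, by norm_num, fun α hα0 hα ↦ ⟨10 ^ 12, fun N hN hN0 ↦ ?_⟩⟩
  have : Fact N.Prime := ⟨hN⟩
  have hNpos : (0 : ℝ) < N := by exact_mod_cast hN.pos
  obtain ⟨f, hf, hmean, hcount⟩ := exists_dense_function_few_configurations
    (ZMod.isPrimitive_stdAddChar N) (by rw [ZMod.ringChar_zmod_n]; omega)
    (by rw [ZMod.card]; omega) hα0 hα.le
  rw [ZMod.card] at hmean hcount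
  refine ⟨f, hf, ?_, fun d hd ↦ ?_⟩
  · rw [ZMod.sum_range_natCast, one_div, inv_mul_eq_div, le_div_iff₀ hNpos]
    exact hmean
  · rw [ZMod.sum_range_natCast N fun t ↦ f t * f (t + d) * f (t + 2 * d) * f (t + 5 * d),
      one_div, inv_mul_eq_div, div_lt_iff₀ hNpos]
    exact hcount d hd
end
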